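/- arXiv:2103.14436 — 6 statements merged into one kernel-verified Lean document; each statement's English description precedes it below -/
import Mathlib

section
/- Let G=(V,E,w) be a finite weighted directed tree and let x,y∈V be at (unweighted shortest-path) distance d, with (z_i)_{i=0}^{d} the unique sequence of vertices with z_0=x, z_d=y and d(z_{i-1},z_i)=1 for all i∈[d]. For a subset I⊆[d] let G_I denote the graph obtained from G by removing, for each i∈I, all edges between z_{i-1} and z_i, and denote by G_I^1,…,G_I^{|I|+1} the |I|+1 weakly connected components of G_I. Then for every q>0, U_q^{(G)}(x,y) = (1/Z_G(q))·∑_{k=1}^{d} (−1)^{k+1} ∑_{I∈([d] choose k)} ∏_{i=1}^{k+1} Z_{G_I^i}(q). In particular, when d(x,y)=1, U_q(x,y) = Z_x(q)·Z_y(q)/Z_G(q), where Z_x(q) and Z_y(q) are the partition functions of the two connected components of the graph obtained by removing the edges between x and y. -/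
/-
In a tree every edge is a bridge, so a rooted forest puts `x` and `y` in different trees exactly
when it misses one of the edges `{z (i-1), z i}` of the path between them (a forest using all of
them joins `x` to `y`; one missing edge `i` is a forest of the tree minus that edge, in which `x`
and `y` are disconnected). Inclusion-exclusion over the missed path edges writes the forest measure of
this event as an alternating sum of the weights of the forests avoiding a set `I` of path edges,
i.e. of `Z_{G_I}`. Finally the partition function of any graph is the product of those of its
components, since a rooted forest is the same as a family of rooted forests of the components.
-/

open Classical Finset Filter

noncomputable section

variable {V : Type*} [Fintype V] [DecidableEq V]

/-- One step of following the parent map of a rooted forest. -/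
def fstep (f : V → Option V) : Option V → Option V := fun o => o.bind f

/-- `f : V → Option V` encodes a spanning rooted forest structure: every vertex either is a
root (`f x = none`) or points to its parent, and iterating the parent map from any vertex
eventually reaches a root (i.e. there are no cycles). -/
def IsForest (f : V → Option V) : Prop :=
  ∀ x : V, ∃ n : ℕ, (fstep f)^[n] (some x) = none

/-- `f` is a spanning rooted forest of the directed graph with edge relation `E`:
all its (parent-pointing) edges are edges of the graph. -/
def IsRForest (E : V → V → Prop) (f : V → Option V) : Prop :=
  IsForest f ∧ ∀ x y : V, f x = some y → E x y

/-- The number of roots (equivalently, of trees) of a rooted forest. -/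
def nRoots (f : V → Option V) : ℕ := (univ.filter fun x : V => f x = none).card

/-- The weight `w(F) = ∏_{e ∈ F} w(e)` of a rooted forest. -/
def fWeight (w : V → V → ℝ) (f : V → Option V) : ℝ :=
  ∏ x : V, (f x).elim 1 (fun y => w x y)

/-- Non-normalised forest measure of a set `H` of forests: `∑_{F ∈ H} q^{r(F)} w(F)`,
the sum running over spanning rooted forests of the graph belonging to `H`. -/
def fMeasure (E : V → V → Prop) (w : V → V → ℝ) (q : ℝ) (H : Set (V → Option V)) : ℝ :=
  ∑ f ∈ univ.filter (fun f : V → Option V => IsRForest E f ∧ f ∈ H),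
    q ^ nRoots f * fWeight w f

/-- Partition function `Z(q) = ∑_F q^{r(F)} w(F)`. -/
def Zf (E : V → V → Prop) (w : V → V → ℝ) (q : ℝ) : ℝ := fMeasure E w q Set.univ

/-- Probability `P(Φ_q ∈ H)` for the random spanning rooted forest `Φ_q`. -/
def fProb (E : V → V → Prop) (w : V → V → ℝ) (q : ℝ) (H : Set (V → Option V)) : ℝ :=
  fMeasure E w q H / Zf E w q

/-- Ancestor relation in the forest `f`. -/
def anc (f : V → Option V) : V → V → Prop :=
  Relation.ReflTransGen (fun a b => f a = some b)

/-- `x` and `y` belong to the same tree of the forest `f` (they have a common ancestor). -/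
def SameTree (f : V → Option V) (x y : V) : Prop := ∃ z, anc f x z ∧ anc f y z

/-- Two-point correlation `U_q(x,y)`: the probability that `x` and `y` lie in
different trees of `Φ_q`. -/
def Ucorr (E : V → V → Prop) (w : V → V → ℝ) (q : ℝ) (x y : V) : ℝ :=
  fProb E w q {f | ¬ SameTree f x y}

end

noncomputable section

variable {V : Type*} [Fintype V] [DecidableEq V]

/-- The underlying undirected simple graph of a directed edge relation. -/
def usg (E : V → V → Prop) : SimpleGraph V where
  Adj a b := a ≠ b ∧ (E a b ∨ E b a)
  symm := ⟨fun _ _ h => ⟨h.1.symm, h.2.symm⟩⟩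
  loopless := ⟨fun _ h => h.1 rfl⟩

/-- Partition function of the induced (directed, weighted) subgraph on a vertex set `S`. -/
def ZOn (E : V → V → Prop) (w : V → V → ℝ) (S : Set V) (q : ℝ) : ℝ :=
  Zf (fun a b : S => E a.1 b.1) (fun a b : S => w a.1 b.1) q

/-- The product, over the (weakly) connected components of the graph, of the partition
functions of the corresponding induced subgraphs. -/
def ZComps (E : V → V → Prop) (w : V → V → ℝ) (q : ℝ) : ℝ :=
  ∏ c : (usg E).ConnectedComponent, ZOn E w c.supp q

end

namespace Finset

theorem sum_powerset_filter_nonempty {ι M : Type*} [AddCommMonoid M] (s : Finset ι)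
    (g : Finset ι → M) :
    ∑ t ∈ s.powerset with t.Nonempty, g t = ∑ k ∈ Icc 1 #s, ∑ t ∈ s.powersetCard k, g t := by
  rw [sum_filter, sum_powerset, range_eq_Ico, sum_eq_sum_Ico_succ_bot (Nat.succ_pos _),
    Nat.succ_eq_add_one, Ico_add_one_right_eq_Icc]
  simp only [powersetCard_zero, sum_singleton, not_nonempty_empty, if_false, zero_add]
  refine sum_congr rfl fun k hk => sum_congr rfl fun t ht => if_pos ?_
  rw [← card_pos, (mem_powersetCard.mp ht).2]
  exact (mem_Icc.mp hk).1

end Finset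

namespace SimpleGraph

variable {α : Type*} {G : SimpleGraph α}

theorem exists_walk_length_of_adj_pred {z : ℕ → α} {a b : ℕ} (hab : a ≤ b)
    (hz : ∀ i, a < i → i ≤ b → G.Adj (z (i - 1)) (z i)) :
    ∃ p : G.Walk (z a) (z b), p.length = b - a := by
  induction b, hab using Nat.le_induction with
  | base => exact ⟨.nil, by simp⟩
  | succ b hab ih =>
    obtain ⟨p, hp⟩ := ih fun i hi hib => hz i hi (by omega)
    have hadj : G.Adj (z b) (z (b + 1)) := by simpa using hz (b + 1) (by omega) le_rfl
    exact ⟨p.concat hadj, by simp only [Walk.length_concat, hp]; omega⟩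

theorem injOn_of_dist_eq {z : ℕ → α} {d : ℕ}
    (hz : ∀ i, 1 ≤ i → i ≤ d → G.Adj (z (i - 1)) (z i)) (hd : G.dist (z 0) (z d) = d) :
    Set.InjOn z (Set.Iic d) := by
  have hlt : ∀ a b, a < b → b ≤ d → z a ≠ z b := by
    intro a b hab hbd hzab
    obtain ⟨p, hp⟩ :=
      exists_walk_length_of_adj_pred (Nat.zero_le a) fun i hi hia => hz i hi (by omega)
    obtain ⟨r, hr⟩ := exists_walk_length_of_adj_pred hbd fun i hi hid => hz i (by omega) hid
    have := dist_le (p.append (r.copy hzab.symm rfl))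
    simp only [Walk.length_append, Walk.length_copy, hp, hr, hd] at this
    omega
  intro a ha b hb hzab
  rcases lt_trichotomy a b with h | h | h
  exacts [absurd hzab (hlt a b h hb), h, absurd hzab.symm (hlt b a h ha)]

theorem IsAcyclic.not_reachable_deleteEdges_of_injOn (hG : G.IsAcyclic) {z : ℕ → α} {d : ℕ}
    (hz : ∀ i, 1 ≤ i → i ≤ d → G.Adj (z (i - 1)) (z i)) (hinj : Set.InjOn z (Set.Iic d))
    {i : ℕ} (hi1 : 1 ≤ i) (hid : i ≤ d) :
    ¬ (G.deleteEdges {s(z (i - 1), z i)}).Reachable (z 0) (z d) := by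
  have hbridge : ¬ (G.deleteEdges {s(z (i - 1), z i)}).Reachable (z (i - 1)) (z i) :=
    isAcyclic_iff_forall_adj_isBridge.mp hG (hz i hi1 hid)
  have hadj : ∀ j, 1 ≤ j → j ≤ d → j ≠ i →
      (G.deleteEdges {s(z (i - 1), z i)}).Adj (z (j - 1)) (z j) := by
    intro j hj1 hjd hji
    refine deleteEdges_adj.mpr ⟨hz j hj1 hjd, fun he => hji ?_⟩
    rcases Sym2.eq_iff.mp (Set.mem_singleton_iff.mp he) with ⟨h1, h2⟩ | ⟨h1, h2⟩
    · exact hinj (Set.mem_Iic.mpr (by omega)) (Set.mem_Iic.mpr (by omega)) h2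
    · have := hinj (Set.mem_Iic.mpr (by omega)) (Set.mem_Iic.mpr (by omega)) h1
      have := hinj (Set.mem_Iic.mpr (by omega)) (Set.mem_Iic.mpr (by omega)) h2
      omega
  intro hreach
  obtain ⟨p, -⟩ := exists_walk_length_of_adj_pred (Nat.zero_le (i - 1))
    fun j hj hji => hadj j hj (by omega) (by omega)
  obtain ⟨r, -⟩ := exists_walk_length_of_adj_pred hid
    fun j hj hjd => hadj j (by omega) hjd (by omega)
  exact hbridge ((p.reachable.symm.trans hreach).trans r.reachable.symm)

theorem Connected.reachable_deleteEdges_or_reachable (hG : G.Connected) (u v a : α) :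
    (G.deleteEdges {s(u, v)}).Reachable a u ∨ (G.deleteEdges {s(u, v)}).Reachable a v := by
  suffices ∀ b c (p : G.Walk b c), c = u →
      (G.deleteEdges {s(u, v)}).Reachable b u ∨ (G.deleteEdges {s(u, v)}).Reachable b v from
    this a u (hG.preconnected a u).some rfl
  intro b c p hc
  induction p with
  | nil => subst hc; exact .inl .rfl
  | @cons b b' _ hbb' _ ih =>
    by_cases he : s(b, b') = s(u, v)
    · rcases Sym2.eq_iff.mp he with ⟨rfl, -⟩ | ⟨rfl, -⟩
      exacts [.inl .rfl, .inr .rfl]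
    · have hadj : (G.deleteEdges {s(u, v)}).Adj b b' := by simp [hbb', he]
      exact (ih hc).imp hadj.reachable.trans hadj.reachable.trans

theorem prod_connectedComponent_supp {M : Type*} [CommMonoid M] [Fintype α]
    [Fintype G.ConnectedComponent] [∀ c : G.ConnectedComponent, Fintype c.supp] (h : α → M) :
    ∏ c : G.ConnectedComponent, ∏ a : c.supp, h a = ∏ a, h a := by
  rw [← Finset.prod_fiberwise univ G.connectedComponentMk h]
  refine Finset.prod_congr rfl fun c _ => (Finset.prod_subtype _ (fun a => ?_) _).symm
  simp [ConnectedComponent.mem_supp_iff]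

end SimpleGraph

section Forests

variable {V : Type*}

theorem IsForest.apply_ne_some_self {f : V → Option V} (hf : IsForest f) (a : V) :
    f a ≠ some a := fun h => by
  obtain ⟨n, hn⟩ := hf a
  rw [Function.iterate_fixed (show fstep f (some a) = some a from h)] at hn
  exact Option.some_ne_none a hn

theorem sameTree_equivalence (f : V → Option V) : Equivalence (SameTree f) where
  refl a := ⟨a, .refl, .refl⟩
  symm := fun ⟨c, hac, hbc⟩ => ⟨c, hbc, hac⟩
  -- the ancestors of a vertex form a chain, the parent relation being functional
  trans := fun ⟨c, hac, hbc⟩ ⟨c', hbc', hdc'⟩ =>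
    (Relation.ReflTransGen.total_of_right_unique (fun _ _ _ h h' => Option.some_injective _
      (h.symm.trans h')) hbc hbc').elim
      (fun hcc' => ⟨c', hac.trans hcc', hdc'⟩) (fun hc'c => ⟨c, hac, hdc'.trans hc'c⟩)

theorem sameTree_of_apply_eq_some {f : V → Option V} {a b : V} (h : f a = some b) :
    SameTree f a b :=
  ⟨b, .single h, .refl⟩

theorem SameTree.reachable {f : V → Option V} {G : SimpleGraph V}
    (hG : ∀ a b, f a = some b → G.Adj a b) {a b : V} (h : SameTree f a b) : G.Reachable a b := by
  have hanc : ∀ {a c}, anc f a c → G.Reachable a c := fun hac => by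
    induction hac with
    | refl => exact .rfl
    | tail _ hbc ih => exact ih.trans (hG _ _ hbc).reachable
  obtain ⟨c, hac, hbc⟩ := h
  exact (hanc hac).trans (hanc hbc).symm

theorem isRForest_and_iff {E P : V → V → Prop} {f : V → Option V} :
    IsRForest (fun a b => E a b ∧ P a b) f ↔ IsRForest E f ∧ ∀ a b, f a = some b → P a b :=
  ⟨fun ⟨hf, hE⟩ => ⟨⟨hf, fun a b h => (hE a b h).1⟩, fun a b h => (hE a b h).2⟩,
    fun ⟨⟨hf, hE⟩, hP⟩ => ⟨hf, fun a b h => ⟨hE a b h, hP a b h⟩⟩⟩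

end Forests

theorem pow_nRoots_mul_fWeight {V : Type*} [Fintype V] (q : ℝ) (w : V → V → ℝ)
    (f : V → Option V) : q ^ nRoots f * fWeight w f = ∏ a, (f a).elim q (w a) := by
  have hroots : q ^ nRoots f = ∏ a, if f a = none then q else 1 := by
    rw [Finset.prod_ite, Finset.prod_const, Finset.prod_const_one, mul_one, nRoots]
  rw [hroots, fWeight, ← Finset.prod_mul_distrib]
  refine Finset.prod_congr rfl fun a _ => ?_
  cases f a <;> simp

section ForestMeasure

variable {V : Type*} [Fintype V] [DecidableEq V] (E : V → V → Prop) (w : V → V → ℝ) (q : ℝ)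

theorem Zf_eq_sum : Zf E w q = ∑ f ∈ univ.filter (IsRForest E), ∏ a, (f a).elim q (w a) := by
  simp only [Zf, fMeasure, Set.mem_univ, and_true, pow_nRoots_mul_fWeight]

variable {E} in
theorem fMeasure_congr {H H' : Set (V → Option V)}
    (h : ∀ f, IsRForest E f → (f ∈ H ↔ f ∈ H')) : fMeasure E w q H = fMeasure E w q H' :=
  Finset.sum_congr (Finset.filter_congr fun f _ => and_congr_right (h f)) fun _ _ => rfl

theorem fMeasure_eq_sum_indicator (H : Set (V → Option V)) :
    fMeasure E w q H = ∑ f ∈ univ.filter (IsRForest E),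
      H.indicator (fun f => q ^ nRoots f * fWeight w f) f := by
  rw [fMeasure, ← Finset.filter_filter, Finset.sum_filter]
  rfl

theorem fMeasure_biUnion {ι : Type*} (s : Finset ι) (S : ι → Set (V → Option V)) :
    fMeasure E w q (⋃ i ∈ s, S i) =
      ∑ t ∈ s.powerset with t.Nonempty, (-1) ^ (#t + 1) * fMeasure E w q (⋂ i ∈ t, S i) := by
  simp_rw [fMeasure_eq_sum_indicator, Finset.indicator_biUnion_eq_sum_powerset]
  rw [Finset.sum_comm]
  simp_rw [Finset.mul_sum, zsmul_eq_mul]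
  push_cast
  rfl

theorem fMeasure_setOf_forall_parent (P : V → V → Prop) :
    fMeasure E w q {f | ∀ a b, f a = some b → P a b} = Zf (fun a b => E a b ∧ P a b) w q := by
  unfold Zf fMeasure
  congr 1
  ext f
  simp [isRForest_and_iff]

end ForestMeasure

section Components

variable {V : Type*} (E : V → V → Prop)

def glueForests (g : ∀ c : (usg E).ConnectedComponent, c.supp → Option c.supp) :
    V → Option V :=
  fun a => (g _ ⟨a, rfl⟩).map Subtype.val

noncomputable def restrictForest (f : V → Option V) (c : (usg E).ConnectedComponent) :
    c.supp → Option c.supp :=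
  fun a => (f a).bind fun b => if hb : b ∈ c.supp then some ⟨b, hb⟩ else none

variable {E}

theorem glueForests_apply (g : ∀ c : (usg E).ConnectedComponent, c.supp → Option c.supp)
    {c : (usg E).ConnectedComponent} {a : V} (ha : a ∈ c.supp) :
    glueForests E g a = (g c ⟨a, ha⟩).map Subtype.val := by
  obtain rfl : (usg E).connectedComponentMk a = c := ha
  rfl

theorem restrictForest_glueForests
    (g : ∀ c : (usg E).ConnectedComponent, c.supp → Option c.supp) :
    restrictForest E (glueForests E g) = g := by
  ext c ⟨a, ha⟩ : 2
  rw [restrictForest, glueForests_apply g ha]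
  cases g c ⟨a, ha⟩ with
  | none => rfl
  | some b => simp only [Option.map_some, Option.bind_some, dif_pos b.2]

theorem glueForests_restrictForest {f : V → Option V}
    (hf : ∀ a b, f a = some b → (usg E).connectedComponentMk a = (usg E).connectedComponentMk b) :
    glueForests E (restrictForest E f) = f := by
  ext1 a
  rw [glueForests_apply _ (show a ∈ ((usg E).connectedComponentMk a).supp from rfl),
    restrictForest]
  cases hfa : f a with
  | none => rfl
  | some b => simp [SimpleGraph.ConnectedComponent.eq.mp (hf a b hfa).symm]

theorem IsRForest.connectedComponentMk_eq {f : V → Option V} (hf : IsRForest E f) {a b : V}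
    (hab : f a = some b) : (usg E).connectedComponentMk a = (usg E).connectedComponentMk b :=
  SimpleGraph.ConnectedComponent.eq.mpr
    (SimpleGraph.Adj.reachable ⟨fun h => hf.1.apply_ne_some_self a (h ▸ hab), .inl (hf.2 a b hab)⟩)

theorem fstep_glueForests_semiconj
    (g : ∀ c : (usg E).ConnectedComponent, c.supp → Option c.supp)
    (c : (usg E).ConnectedComponent) :
    Function.Semiconj (Option.map Subtype.val) (fstep (g c)) (fstep (glueForests E g)) := by
  rintro (_ | a)
  · rfl
  · exact (glueForests_apply g a.2).symm

theorem isRForest_glueForests_iff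
    (g : ∀ c : (usg E).ConnectedComponent, c.supp → Option c.supp) :
    IsRForest E (glueForests E g) ↔
      ∀ c : (usg E).ConnectedComponent, IsRForest (fun a b : c.supp => E a.1 b.1) (g c) := by
  have hiter := fun c n (a : c.supp) =>
    ((fstep_glueForests_semiconj g c).iterate_right n (some a)).symm
  constructor
  · refine fun hf c => ⟨fun a => ?_, fun a b hab => hf.2 a b ?_⟩
    · obtain ⟨n, hn⟩ := hf.1 a
      exact ⟨n, Option.map_eq_none_iff.mp ((hiter c n a).symm.trans hn)⟩
    · rw [glueForests_apply g a.2, hab]; rfl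
  · refine fun hg => ⟨fun a => ?_, fun a b hab => ?_⟩
    · obtain ⟨n, hn⟩ := (hg _).1 ⟨a, rfl⟩
      exact ⟨n, (hiter _ n ⟨a, rfl⟩).trans (by rw [hn]; rfl)⟩
    · rw [glueForests_apply g (show a ∈ ((usg E).connectedComponentMk a).supp from rfl)] at hab
      obtain ⟨b', hb', rfl⟩ := Option.map_eq_some_iff.mp hab
      exact (hg _).2 _ b' hb'

end Components

theorem Zf_eq_ZComps {V : Type*} [Fintype V] [DecidableEq V] (E : V → V → Prop)
    (w : V → V → ℝ) (q : ℝ) : Zf E w q = ZComps E w q := by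
  simp only [ZComps, ZOn, Zf_eq_sum, Finset.prod_univ_sum]
  symm
  refine Finset.sum_nbij' (glueForests E) (restrictForest E) ?_ ?_ ?_ ?_ ?_
  · intro g hg
    simp only [Fintype.mem_piFinset, Finset.mem_filter, Finset.mem_univ, true_and] at hg ⊢
    exact (isRForest_glueForests_iff g).mpr hg
  · intro f hf
    simp only [Fintype.mem_piFinset, Finset.mem_filter, Finset.mem_univ, true_and] at hf ⊢
    have hglue := glueForests_restrictForest fun _ _ => hf.connectedComponentMk_eq
    exact (isRForest_glueForests_iff _).mp (hglue ▸ hf)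
  · intro g _
    exact restrictForest_glueForests g
  · intro f hf
    exact glueForests_restrictForest fun a b =>
      (Finset.mem_filter.mp hf).2.connectedComponentMk_eq
  · intro g _
    rw [← SimpleGraph.prod_connectedComponent_supp (G := usg E)]
    -- `ZOn` carries the classical `Fintype c.supp` instance, not the one found by instance search.
    refine Finset.prod_congr rfl fun c _ =>
      Finset.prod_congr (congrArg _ (Subsingleton.elim _ _)) fun a _ => ?_
    rw [glueForests_apply g a.2]
    cases g c a <;> rfl

section TreePath

variable {V : Type*} {E : V → V → Prop}

theorem usg_adj {a b : V} : (usg E).Adj a b ↔ a ≠ b ∧ (E a b ∨ E b a) := Iff.rfl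

theorem usg_and_not_edge (u v : V) :
    usg (fun a b => E a b ∧ ¬((a = u ∧ b = v) ∨ (a = v ∧ b = u))) =
      (usg E).deleteEdges {s(u, v)} := by
  ext a b
  simp only [usg_adj, SimpleGraph.deleteEdges_adj, Set.mem_singleton_iff, Sym2.eq_iff]
  tauto

theorem IsRForest.adj_deleteEdges {f : V → Option V} (hf : IsRForest E f) {u v : V}
    (hu : f u ≠ some v) (hv : f v ≠ some u) {a b : V} (hab : f a = some b) :
    ((usg E).deleteEdges {s(u, v)}).Adj a b := by
  refine SimpleGraph.deleteEdges_adj.mpr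
    ⟨⟨fun h => hf.1.apply_ne_some_self a (h ▸ hab), .inl (hf.2 a b hab)⟩, fun he => ?_⟩
  rcases Sym2.eq_iff.mp (Set.mem_singleton_iff.mp he) with ⟨rfl, rfl⟩ | ⟨rfl, rfl⟩
  exacts [hu hab, hv hab]

theorem IsRForest.not_sameTree_iff {f : V → Option V} (hf : IsRForest E f)
    (hE : (usg E).IsAcyclic) {z : ℕ → V} {d : ℕ}
    (hz : ∀ i, 1 ≤ i → i ≤ d → (usg E).Adj (z (i - 1)) (z i)) (hinj : Set.InjOn z (Set.Iic d)) :
    ¬ SameTree f (z 0) (z d) ↔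
      ∃ i ∈ Finset.Icc 1 d, f (z (i - 1)) ≠ some (z i) ∧ f (z i) ≠ some (z (i - 1)) := by
  constructor
  · intro hns
    by_contra! hused
    have hchain : ∀ k ≤ d, SameTree f (z 0) (z k) := by
      intro k
      induction k with
      | zero => exact fun _ => (sameTree_equivalence f).refl _
      | succ k ih =>
        intro hk
        have hstep : SameTree f (z k) (z (k + 1)) := by
          by_cases he : f (z k) = some (z (k + 1))
          · exact sameTree_of_apply_eq_some he
          · have hback := hused (k + 1) (Finset.mem_Icc.mpr ⟨by omega, hk⟩) (by simpa using he)
            exact (sameTree_equivalence f).symm (sameTree_of_apply_eq_some (by simpa using hback))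
        exact (sameTree_equivalence f).trans (ih (by omega)) hstep
    exact hns (hchain d le_rfl)
  · rintro ⟨i, hi, hu, hv⟩ hsame
    obtain ⟨hi1, hid⟩ := Finset.mem_Icc.mp hi
    exact hE.not_reachable_deleteEdges_of_injOn hz hinj hi1 hid
      (hsame.reachable fun _ _ => hf.adj_deleteEdges hu hv)

end TreePath

theorem ZComps_eq_mul_of_forall_reachable {V : Type*} [Fintype V] [DecidableEq V]
    {E : V → V → Prop} (w : V → V → ℝ) (q : ℝ) {x y : V} (hxy : ¬ (usg E).Reachable x y)
    (hcover : ∀ a, (usg E).Reachable a x ∨ (usg E).Reachable a y) :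
    ZComps E w q = ZOn E w ((usg E).connectedComponentMk x).supp q *
      ZOn E w ((usg E).connectedComponentMk y).supp q := by
  have huniv : (univ : Finset (usg E).ConnectedComponent) =
      {(usg E).connectedComponentMk x, (usg E).connectedComponentMk y} := by
    ext c
    induction c using SimpleGraph.ConnectedComponent.ind with
    | h a => simpa [SimpleGraph.ConnectedComponent.eq] using hcover a
  rw [ZComps, huniv, Finset.prod_pair fun h => hxy (SimpleGraph.ConnectedComponent.eq.mp h)]

theorem fMeasure_not_sameTree_eq {V : Type*} [Fintype V] [DecidableEq V] (E : V → V → Prop)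
    (w : V → V → ℝ) (q : ℝ) (hE : (usg E).IsAcyclic) {z : ℕ → V} {d : ℕ}
    (hz : ∀ i, 1 ≤ i → i ≤ d → (usg E).Adj (z (i - 1)) (z i)) (hinj : Set.InjOn z (Set.Iic d)) :
    fMeasure E w q {f | ¬ SameTree f (z 0) (z d)} =
      ∑ k ∈ Finset.Icc 1 d, (-1 : ℝ) ^ (k + 1) *
        ∑ I ∈ (Finset.Icc 1 d).powersetCard k,
          ZComps (fun a b => E a b ∧
            ∀ i ∈ I, ¬((a = z (i - 1) ∧ b = z i) ∨ (a = z i ∧ b = z (i - 1)))) w q := by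
  calc fMeasure E w q {f | ¬ SameTree f (z 0) (z d)}
      = fMeasure E w q (⋃ i ∈ Finset.Icc 1 d,
          {f | f (z (i - 1)) ≠ some (z i) ∧ f (z i) ≠ some (z (i - 1))}) :=
        fMeasure_congr w q fun f hf => by
          simpa only [Set.mem_ofPred_eq, Set.mem_iUnion₂, exists_prop, Finset.mem_coe]
            using hf.not_sameTree_iff hE hz hinj
    _ = ∑ I ∈ (Finset.Icc 1 d).powerset with I.Nonempty, (-1 : ℝ) ^ (#I + 1) *
          ZComps (fun a b => E a b ∧
            ∀ i ∈ I, ¬((a = z (i - 1) ∧ b = z i) ∨ (a = z i ∧ b = z (i - 1)))) w q := by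
        rw [fMeasure_biUnion]
        refine Finset.sum_congr rfl fun I _ => ?_
        rw [← Zf_eq_ZComps, ← fMeasure_setOf_forall_parent]
        congr 2
        ext f
        simp only [Set.mem_iInter, Set.mem_ofPred_eq]
        constructor
        · rintro h a b hab i hi (⟨rfl, rfl⟩ | ⟨rfl, rfl⟩)
          exacts [(h i hi).1 hab, (h i hi).2 hab]
        · exact fun h i hi =>
            ⟨fun he => h _ _ he i hi (.inl ⟨rfl, rfl⟩), fun he => h _ _ he i hi (.inr ⟨rfl, rfl⟩)⟩
    _ = _ := by
        rw [Finset.sum_powerset_filter_nonempty, Nat.card_Icc, Nat.add_sub_cancel]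
        refine Finset.sum_congr rfl fun k _ => ?_
        rw [Finset.mul_sum]
        refine Finset.sum_congr rfl fun I hI => ?_
        rw [(Finset.mem_powersetCard.mp hI).2]

noncomputable section

variable {V : Type*} [Fintype V] [DecidableEq V]

/-- `G_I` is the edge relation `fun a b => E a b ∧ ∀ i ∈ I, …`, and `∏ᵢ Z_{G_I^i}` is its
`ZComps`. -/
theorem inclusion_exclusion_two_point_tree_general (E : V → V → Prop) (w : V → V → ℝ)
    (htree : (usg E).IsTree)
    (x y : V) (d : ℕ) (hd : d = (usg E).dist x y)
    (z : ℕ → V) (hz0 : z 0 = x) (hzd : z d = y)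
    (hzadj : ∀ i, 1 ≤ i → i ≤ d → (usg E).Adj (z (i - 1)) (z i))
    (q : ℝ) :
    Ucorr E w q x y =
      (1 / Zf E w q) *
        ∑ k ∈ Finset.Icc 1 d, (-1 : ℝ) ^ (k + 1) *
          ∑ I ∈ (Finset.Icc 1 d).powersetCard k,
            ZComps (fun a b => E a b ∧
              ∀ i ∈ I, ¬((a = z (i - 1) ∧ b = z i) ∨ (a = z i ∧ b = z (i - 1)))) w q ∧
    (d = 1 →
      Ucorr E w q x y =
        ZOn (fun a b => E a b ∧ ¬((a = x ∧ b = y) ∨ (a = y ∧ b = x))) w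
            ((usg fun a b => E a b ∧
              ¬((a = x ∧ b = y) ∨ (a = y ∧ b = x))).connectedComponentMk x).supp q *
          ZOn (fun a b => E a b ∧ ¬((a = x ∧ b = y) ∨ (a = y ∧ b = x))) w
            ((usg fun a b => E a b ∧
              ¬((a = x ∧ b = y) ∨ (a = y ∧ b = x))).connectedComponentMk y).supp q /
          Zf E w q) := by
  subst hz0 hzd
  have hnum := fMeasure_not_sameTree_eq E w q htree.isAcyclic hzadj
    (SimpleGraph.injOn_of_dist_eq hzadj hd.symm)
  refine ⟨by rw [Ucorr, fProb, hnum, div_eq_inv_mul, one_div], fun hd1 => ?_⟩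
  subst hd1
  have hcut := usg_and_not_edge (E := E) (z 0) (z 1)
  have hxy := hzadj 1 le_rfl le_rfl
  rw [Ucorr, fProb, hnum, Finset.Icc_self, Finset.sum_singleton, Finset.powersetCard_one,
    Finset.map_singleton, Finset.sum_singleton]
  simp only [Function.Embedding.coeFn_mk, Finset.mem_singleton, forall_eq, Nat.sub_self]
  rw [ZComps_eq_mul_of_forall_reachable w q (x := z 0) (y := z 1)]
  · ring
  · rw [hcut]
    exact SimpleGraph.isAcyclic_iff_forall_adj_isBridge.mp htree.isAcyclic hxy
  · rw [hcut]
    exact htree.connected.reachable_deleteEdges_or_reachable _ _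

/-- **Inclusion-exclusion for the 2-point correlation on trees.** Here `z 0 = x, …, z d = y`
is the path between `x` and `y`; `G_I` is obtained from `G` by removing, for `i ∈ I`, all
edges between `z (i-1)` and `z i`, and the product of the partition functions of the
`|I|+1` components of `G_I` is `ZComps` of `G_I`. -/
theorem inclusion_exclusion_two_point_tree (E : V → V → Prop) (w : V → V → ℝ)
    (hw : ∀ a b : V, 0 ≤ w a b) (htree : (usg E).IsTree)
    (x y : V) (d : ℕ) (hd : d = (usg E).dist x y)
    (z : ℕ → V) (hz0 : z 0 = x) (hzd : z d = y)
    (hzadj : ∀ i, 1 ≤ i → i ≤ d → (usg E).Adj (z (i - 1)) (z i))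
    (q : ℝ) (hq : 0 < q) :
    Ucorr E w q x y =
      (1 / Zf E w q) *
        ∑ k ∈ Finset.Icc 1 d, (-1 : ℝ) ^ (k + 1) *
          ∑ I ∈ (Finset.Icc 1 d).powersetCard k,
            ZComps (fun a b => E a b ∧
              ∀ i ∈ I, ¬((a = z (i - 1) ∧ b = z i) ∨ (a = z i ∧ b = z (i - 1)))) w q ∧
    (d = 1 →
      Ucorr E w q x y =
        ZOn (fun a b => E a b ∧ ¬((a = x ∧ b = y) ∨ (a = y ∧ b = x))) w
            ((usg fun a b => E a b ∧
              ¬((a = x ∧ b = y) ∨ (a = y ∧ b = x))).connectedComponentMk x).supp q *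
          ZOn (fun a b => E a b ∧ ¬((a = x ∧ b = y) ∨ (a = y ∧ b = x))) w
            ((usg fun a b => E a b ∧
              ¬((a = x ∧ b = y) ∨ (a = y ∧ b = x))).connectedComponentMk y).supp q /
          Zf E w q) :=
  inclusion_exclusion_two_point_tree_general E w htree x y d hd z hz0 hzd hzadj q

end
end

section
/- Let PG_n be the path graph on n vertices with unit edge weights, and let L be its graph Laplacian. Then the partition function Z_{PG_n}(q) = det(qI − L) satisfies Z_{PG_n}(q) = ∑_{k=1}^{n} C(n+k−1, 2k−1) · q^k for all q, where C(a,b) denotes the binomial coefficient. -/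
/-!
Ordering the vertices along the path, `q I - L` is tridiagonal with off-diagonal entries `-1`
and diagonal `q + deg i`. Expanding along the last row, its leading principal minors `P k`
(diagonal `q + 1, q + 2, …, q + 2`) satisfy `P (k + 2) = (q + 2) P (k + 1) - P k`, the recurrence
of the Morgan–Voyce polynomial `b k = ∑ C(k + j, 2j) q ^ j`; and since the last diagonal entry of
`q I - L` is `q + 1` rather than `q + 2`, `Z_{PG (m+1)} = P (m + 1) - P m = b (m + 1) - b m`.
Pascal's rule turns this difference into `q · B m` with `B m = ∑ C(m + j + 1, 2j + 1) q ^ j`,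
which is the claimed sum after shifting the index.
-/

open Classical Finset

noncomputable section

/-- The graph Laplacian `L = A - D` of the weighted directed graph with edge relation `E`
and weights `w`: `A x y = w x y · 1_{E x y, x ≠ y}` and `D` is the diagonal matrix of
total outgoing weights. -/
def lapOf {V : Type*} [Fintype V] [DecidableEq V] (E : V → V → Prop) (w : V → V → ℝ) :
    Matrix V V ℝ := fun x y =>
  (if E x y ∧ x ≠ y then w x y else 0) -
    (if x = y then ∑ z : V, (if E x z ∧ x ≠ z then w x z else 0) else 0)

/-- The partition function `Z(q) = det (q·I - L)` (matrix-forest theorem). -/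
def Zdet {V : Type*} [Fintype V] [DecidableEq V] (E : V → V → Prop) (w : V → V → ℝ)
    (q : ℝ) : ℝ := (q • (1 : Matrix V V ℝ) - lapOf E w).det

/-- The path graph on `n` vertices: `i` and `i+1` are adjacent. -/
def pathAdj (n : ℕ) : Fin n → Fin n → Prop := fun i j =>
  (i : ℕ) + 1 = (j : ℕ) ∨ (j : ℕ) + 1 = (i : ℕ)

section Tridiagonal

variable {R : Type*} [CommRing R]

-- The bands are indexed by `ℕ`, so all sizes share `a b d` and the leading principal
-- submatrices of `tridiagonal a b d (n + 1)` are again of this form.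
def tridiagonal (a b d : ℕ → R) (n : ℕ) : Matrix (Fin n) (Fin n) R :=
  Matrix.of fun i j =>
    if (i : ℕ) = j then d i
    else if (i : ℕ) + 1 = j then b i
    else if (j : ℕ) + 1 = i then a j
    else 0

namespace tridiagonal

variable (a b d : ℕ → R)

theorem apply_self {n : ℕ} (i : Fin n) : tridiagonal a b d n i i = d i := by
  simp [tridiagonal]

theorem apply_of_val_succ_eq {n : ℕ} (i j : Fin n) (h : (i : ℕ) + 1 = j) :
    tridiagonal a b d n i j = b i := by
  simp only [tridiagonal, Matrix.of_apply]
  split_ifs <;> first | rfl | omega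

theorem apply_of_val_eq_succ {n : ℕ} (i j : Fin n) (h : (i : ℕ) = j + 1) :
    tridiagonal a b d n i j = a j := by
  simp only [tridiagonal, Matrix.of_apply]
  split_ifs <;> first | rfl | omega

theorem apply_of_add_one_lt {n : ℕ} (i j : Fin n) (h : (i : ℕ) + 1 < j ∨ (j : ℕ) + 1 < i) :
    tridiagonal a b d n i j = 0 := by
  simp only [tridiagonal, Matrix.of_apply]
  split_ifs <;> first | rfl | omega

theorem congr_diag {d' : ℕ → R} {n : ℕ} (h : ∀ i < n, d i = d' i) :
    tridiagonal a b d n = tridiagonal a b d' n := by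
  ext i j
  simp [tridiagonal, h i i.isLt]

theorem submatrix_castSucc (n : ℕ) :
    (tridiagonal a b d (n + 1)).submatrix Fin.castSucc Fin.castSucc = tridiagonal a b d n := by
  ext i j
  simp [tridiagonal]

theorem det_succ_succ (n : ℕ) :
    (tridiagonal a b d (n + 2)).det =
      d (n + 1) * (tridiagonal a b d (n + 1)).det - a n * b n * (tridiagonal a b d n).det := by
  have hminor : ((tridiagonal a b d (n + 2)).submatrix Fin.castSucc
      (Fin.last n).castSucc.succAbove).det = b n * (tridiagonal a b d n).det := by
    have hsub : ∀ j : Fin n, (Fin.last n).castSucc.succAbove j.castSucc = j.castSucc.castSucc :=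
      fun j => Fin.succAbove_castSucc_of_lt _ _ (Fin.castSucc_lt_last j)
    rw [Matrix.det_succ_column _ (Fin.last n), Fin.sum_univ_castSucc, Finset.sum_eq_zero]
    · simp only [Fin.succAbove_last, Matrix.submatrix_submatrix, Function.comp_def, hsub,
        Fin.succAbove_castSucc_self, Fin.succ_last, Matrix.submatrix_apply]
      rw [← Function.comp_def, ← Matrix.submatrix_submatrix, submatrix_castSucc,
        submatrix_castSucc, apply_of_val_succ_eq _ _ _ _ _ (by simp), Fin.val_last,
        Fin.val_castSucc, Fin.val_last, (Even.add_self n).neg_one_pow, one_mul, zero_add]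
    · intro i _
      rw [Matrix.submatrix_apply, Fin.succAbove_castSucc_self, Fin.succ_last,
        apply_of_add_one_lt _ _ _ _ _ (by simp), mul_zero, zero_mul]
  rw [Matrix.det_succ_row _ (Fin.last (n + 1)), Fin.sum_univ_castSucc, Fin.sum_univ_castSucc,
    Finset.sum_eq_zero fun j _ => by
      rw [apply_of_add_one_lt _ _ _ _ _ (by simp), mul_zero, zero_mul],
    Fin.succAbove_last, hminor, submatrix_castSucc, apply_self,
    apply_of_val_eq_succ _ _ _ _ _ (by simp)]
  simp only [Fin.val_last, Fin.val_castSucc, (Even.add_self (n + 1)).neg_one_pow]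
  rw [show n + 1 + n = 2 * n + 1 by ring, (odd_two_mul_add_one n).neg_one_pow]
  ring

end tridiagonal

end Tridiagonal

section MorganVoyce

variable {R : Type*} [CommRing R]

def morganVoyceb (q : R) (n : ℕ) : R :=
  ∑ k ∈ range (n + 1), ((n + k).choose (2 * k) : R) * q ^ k

def morganVoyceB (q : R) (n : ℕ) : R :=
  ∑ k ∈ range (n + 1), ((n + k + 1).choose (2 * k + 1) : R) * q ^ k

variable (q : R)

theorem morganVoyceb_eq_sum_range {n N : ℕ} (h : n < N) :
    morganVoyceb q n = ∑ k ∈ range N, ((n + k).choose (2 * k) : R) * q ^ k :=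
  sum_subset (range_subset_range.2 h) fun k _ hk => by
    rw [Nat.choose_eq_zero_of_lt (by simp at hk; omega), Nat.cast_zero, zero_mul]

theorem morganVoyceB_eq_sum_range {n N : ℕ} (h : n < N) :
    morganVoyceB q n = ∑ k ∈ range N, ((n + k + 1).choose (2 * k + 1) : R) * q ^ k :=
  sum_subset (range_subset_range.2 h) fun k _ hk => by
    rw [Nat.choose_eq_zero_of_lt (by simp at hk; omega), Nat.cast_zero, zero_mul]

theorem morganVoyceb_eq_one_add_sum_range {n N : ℕ} (h : n ≤ N) :
    morganVoyceb q n = 1 + ∑ k ∈ range N, ((n + k + 1).choose (2 * k + 2) : R) * q ^ (k + 1) := by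
  rw [morganVoyceb_eq_sum_range q (Nat.lt_succ_of_le h), sum_range_succ', add_comm]
  simp [mul_add, add_assoc]

theorem morganVoyceb_zero : morganVoyceb q 0 = 1 := by
  simp [morganVoyceb]

theorem morganVoyceB_zero : morganVoyceB q 0 = 1 := by
  simp [morganVoyceB]

theorem morganVoyceb_succ (n : ℕ) :
    morganVoyceb q (n + 1) = morganVoyceb q n + q * morganVoyceB q n := by
  rw [morganVoyceb_eq_one_add_sum_range q le_rfl, morganVoyceb_eq_one_add_sum_range q n.le_succ,
    morganVoyceB, mul_sum, add_assoc, ← sum_add_distrib]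
  refine congrArg _ (sum_congr rfl fun k _ => ?_)
  rw [show n + 1 + k + 1 = n + k + 1 + 1 by ring, show 2 * k + 2 = 2 * k + 1 + 1 by ring,
    Nat.choose_succ_succ', Nat.cast_add]
  ring

theorem morganVoyceB_succ (n : ℕ) :
    morganVoyceB q (n + 1) = morganVoyceB q n + morganVoyceb q (n + 1) := by
  rw [morganVoyceB, morganVoyceB_eq_sum_range q (N := n + 2) (by omega), morganVoyceb,
    ← sum_add_distrib]
  refine sum_congr rfl fun k _ => ?_
  rw [show n + 1 + k + 1 = n + k + 1 + 1 by ring, show n + 1 + k = n + k + 1 by ring,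
    Nat.choose_succ_succ', Nat.cast_add]
  ring

theorem morganVoyceb_succ_succ (n : ℕ) :
    morganVoyceb q (n + 2) = (q + 2) * morganVoyceb q (n + 1) - morganVoyceb q n := by
  linear_combination morganVoyceb_succ q (n + 1) + q * morganVoyceB_succ q n -
    morganVoyceb_succ q n

theorem sum_Icc_choose_eq_mul_morganVoyceB (n : ℕ) :
    ∑ k ∈ Icc 1 (n + 1), ((n + 1 + k - 1).choose (2 * k - 1) : R) * q ^ k =
      q * morganVoyceB q n := by
  rw [morganVoyceB, mul_sum, ← Ico_add_one_right_eq_Icc, sum_Ico_eq_sum_range, Nat.add_sub_cancel]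
  refine sum_congr rfl fun k _ => ?_
  rw [show n + 1 + (1 + k) - 1 = n + k + 1 by omega, show 2 * (1 + k) - 1 = 2 * k + 1 by omega]
  ring

theorem det_tridiagonal_eq_morganVoyceb (n : ℕ) :
    (tridiagonal (fun _ => -1) (fun _ => -1) (fun i => if i = 0 then q + 1 else q + 2) n).det =
      morganVoyceb q n := by
  induction n using Nat.twoStepInduction with
  | zero => simp [morganVoyceb_zero]
  | one => simp [Matrix.det_unique, tridiagonal.apply_self, morganVoyceb_succ, morganVoyceb_zero,
      morganVoyceB_zero, add_comm]
  | more n ih₀ ih₁ =>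
    rw [tridiagonal.det_succ_succ, ih₀, ih₁, morganVoyceb_succ_succ, if_neg n.succ_ne_zero]
    ring

end MorganVoyce

theorem pathAdj_and_ne_iff {n : ℕ} (x z : Fin n) :
    pathAdj n x z ∧ x ≠ z ↔ (z : ℕ) = x + 1 ∨ (z : ℕ) + 1 = x := by
  rw [pathAdj, ne_eq, Fin.ext_iff]
  omega

theorem sum_pathAdj_and_ne {n : ℕ} (x : Fin n) :
    ∑ z : Fin n, (if pathAdj n x z ∧ x ≠ z then (1 : ℝ) else 0) =
      (if 0 < (x : ℕ) then 1 else 0) + (if (x : ℕ) + 1 < n then 1 else 0) := by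
  have hsplit : ∀ z : Fin n, (if pathAdj n x z ∧ x ≠ z then (1 : ℝ) else 0) =
      (if (z : ℕ) + 1 = x then 1 else 0) + (if (z : ℕ) = x + 1 then 1 else 0) := by
    intro z
    simp only [pathAdj_and_ne_iff]
    split_ifs <;> norm_num <;> omega
  simp only [hsplit, sum_add_distrib]
  rw [Fin.sum_univ_eq_sum_range (fun z => if z + 1 = (x : ℕ) then (1 : ℝ) else 0),
    Fin.sum_univ_eq_sum_range (fun z => if z = (x : ℕ) + 1 then (1 : ℝ) else 0), sum_ite_eq']
  simp only [mem_range]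
  congr 1
  obtain ⟨x, hx⟩ := x
  cases x with
  | zero => simp
  | succ y =>
    simp only [Nat.add_right_cancel_iff, sum_ite_eq', mem_range, if_pos y.succ_pos]
    exact if_pos (by omega)

theorem smul_one_sub_lapOf_pathAdj (n : ℕ) (q : ℝ) :
    q • (1 : Matrix (Fin n) (Fin n) ℝ) - lapOf (pathAdj n) (fun _ _ => 1) =
      tridiagonal (fun _ => -1) (fun _ => -1)
        (fun i => q + (if 0 < i then 1 else 0) + (if i + 1 < n then 1 else 0)) n := by
  ext i j
  by_cases hij : i = j
  · subst hij
    simp only [Matrix.sub_apply, Matrix.smul_apply, Matrix.one_apply_eq, lapOf, ne_eq,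
      not_true_eq_false, and_false, if_false, if_true, sum_pathAdj_and_ne, tridiagonal.apply_self]
    ring
  · have hval : (i : ℕ) ≠ j := fun h => hij (Fin.ext h)
    simp only [Matrix.sub_apply, Matrix.smul_apply, Matrix.one_apply_ne hij, smul_zero, lapOf,
      if_neg hij, pathAdj_and_ne_iff, tridiagonal, Matrix.of_apply, if_neg hval]
    split_ifs <;> norm_num <;> omega

theorem Zdet_pathAdj_succ (n : ℕ) (q : ℝ) :
    Zdet (pathAdj (n + 1)) (fun _ _ => 1) q = morganVoyceb q (n + 1) - morganVoyceb q n := by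
  rw [Zdet, smul_one_sub_lapOf_pathAdj]
  cases n with
  | zero =>
    simp [Matrix.det_unique, tridiagonal.apply_self, morganVoyceb_succ, morganVoyceb_zero,
      morganVoyceB_zero]
  | succ m =>
    have hdiag : ∀ i < m + 1,
        q + (if 0 < i then 1 else 0) + (if i + 1 < m + 2 then 1 else 0) =
          if i = 0 then q + 1 else q + 2 := by
      intro i hi
      split_ifs <;> first | omega | ring
    rw [tridiagonal.det_succ_succ, tridiagonal.congr_diag _ _ _ hdiag,
      tridiagonal.congr_diag _ _ _ fun i hi => hdiag i (by omega), det_tridiagonal_eq_morganVoyceb,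
      det_tridiagonal_eq_morganVoyceb, morganVoyceb_succ_succ, if_pos m.succ_pos, if_neg (lt_irrefl _)]
    ring

/-- **Partition function of path graphs (combinatorial form).**
`Z_{PG_n}(q) = ∑_{k=1}^{n} C(n+k-1, 2k-1) q^k`. -/
theorem path_partition_combinatorial (n : ℕ) (hn : 0 < n) (q : ℝ) :
    Zdet (pathAdj n) (fun _ _ => (1 : ℝ)) q =
      ∑ k ∈ Finset.Icc 1 n, ((n + k - 1).choose (2 * k - 1) : ℝ) * q ^ k := by
  obtain ⟨m, rfl⟩ : ∃ m, n = m + 1 := ⟨n - 1, by omega⟩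
  rw [Zdet_pathAdj_succ, morganVoyceb_succ, sum_Icc_choose_eq_mul_morganVoyceB]
  ring
end
end

section
/- Let G=(V,E) be a fixed finite undirected tree and let w_n:E→(0,∞) be a sequence of edge weight functions. For each n∈ℕ let q_n>0 be the intensity parameter, and assume that for each edge e∈E the limit of w_n(e)/q_n exists in [0,∞]. Let x,y∈V be two adjacent vertices. Then as n→∞, the two-point correlation U_{q_n}(x,y) (computed in the graph (V,E,w_n)) converges to 0 if q_n = o(w_n(x,y)), and converges to 1 if q_n = ω(w_n(x,y)). -/
open Classical Finset Filter

/-!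
Both bounds compare each forest with a single other forest. If `x` and `y` lie in different
trees of `F`, reroot the tree of `x` at `x` (reversing the path from `x` to its root keeps
`q^{r(F)} w(F)` because the weights are symmetric) and then hang `x` below `y`: the new forest
has one root less and the extra factor `w(x,y)`. If `x` and `y` lie in the same tree, the path
between them in the forest is a path in the tree `G`, hence the edge `xy` itself; cutting it
gives one root more and removes the factor `w(x,y)`. As there are at most `C = |V → Option V|`
forests, `U_q(x,y) ≤ C q / w(x,y)` and `1 - U_q(x,y) ≤ C w(x,y) / q`.
-/

open Function

section ParentMap

variable {V : Type*} {f : V → Option V}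

theorem fstep_iterate_none (f : V → Option V) (n : ℕ) : (fstep f)^[n] none = none :=
  iterate_fixed rfl n

theorem fstep_some (f : V → Option V) (a : V) : fstep f (some a) = f a := rfl

theorem anc_iff_exists_iterate {a b : V} :
    anc f a b ↔ ∃ n, (fstep f)^[n] (some a) = some b := by
  constructor
  · intro h
    induction h with
    | refl => exact ⟨0, rfl⟩
    | tail _ hbc ih =>
      obtain ⟨n, hn⟩ := ih
      exact ⟨n + 1, by rw [iterate_succ_apply', hn, fstep_some, hbc]⟩
  · rintro ⟨n, hn⟩
    induction n generalizing a with
    | zero => cases Option.some_injective _ hn; exact .refl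
    | succ n ih =>
      rw [iterate_succ_apply, fstep_some] at hn
      cases hfa : f a with
      | none => rw [hfa, fstep_iterate_none] at hn; cases hn
      | some c => rw [hfa] at hn; exact .head hfa (ih hn)

theorem IsForest.not_anc_of_eq_some (hf : IsForest f) {a b : V} (hab : f a = some b) :
    ¬ anc f b a := by
  intro hba
  obtain ⟨m, hm⟩ := anc_iff_exists_iterate.1 hba
  have hperiodic : IsPeriodicPt (fstep f) (m + 1) (some a) := by
    rw [IsPeriodicPt, IsFixedPt, iterate_succ_apply, fstep_some, hab, hm]
  obtain ⟨n, hn⟩ := hf a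
  have hnone : (fstep f)^[n * m + n] (some a) = none := by
    rw [iterate_add_apply, hn, fstep_iterate_none]
  rw [show n * m + n = n * (m + 1) by ring, (hperiodic.const_mul n).eq] at hnone
  cases hnone

theorem isForest_of_forall_not_anc [Finite V] (hf : ∀ a b, f a = some b → ¬ anc f b a) :
    IsForest f := by
  intro x
  by_contra! hne
  have hcycle : ∀ i j, i < j → (fstep f)^[i] (some x) ≠ (fstep f)^[j] (some x) := by
    intro i j hij heq
    obtain ⟨b, hb⟩ := Option.ne_none_iff_exists'.1 (hne i)
    obtain ⟨k, rfl⟩ : ∃ k, j = (k + 1) + i := ⟨j - i - 1, by omega⟩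
    rw [iterate_add_apply, hb, iterate_succ_apply, fstep_some] at heq
    cases hfb : f b with
    | none => rw [hfb, fstep_iterate_none] at heq; cases heq
    | some c => rw [hfb] at heq; exact hf b c hfb (anc_iff_exists_iterate.2 ⟨k, heq.symm⟩)
  obtain ⟨i, j, hij, heq⟩ := Finite.exists_ne_map_eq_of_infinite fun n => (fstep f)^[n] (some x)
  rcases hij.lt_or_gt with h | h
  · exact hcycle i j h heq
  · exact hcycle j i h heq.symm

end ParentMap

section Surgery

variable {V : Type*} [DecidableEq V] {E : V → V → Prop} {f : V → Option V}

theorem eq_some_of_update_none_eq_some {c a b : V} (h : update f c none a = some b) :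
    f a = some b := by
  by_cases hac : a = c
  · subst hac; simp at h
  · rwa [update_of_ne hac] at h

theorem eq_some_or_of_update_some_eq_some {x y a b : V} (h : update f x (some y) a = some b) :
    (a = x ∧ b = y) ∨ f a = some b := by
  by_cases hax : a = x
  · subst hax; simp_all
  · rw [update_of_ne hax] at h; exact .inr h

theorem anc_of_anc_update_none {c a b : V} (h : anc (update f c none) a b) : anc f a b :=
  Relation.ReflTransGen.mono (fun _ _ => eq_some_of_update_none_eq_some) _ _ h

theorem anc_update_some {x y a b : V} (hyx : ¬ anc f y x) (h : anc (update f x (some y)) a b) :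
    anc f a b ∨ (anc f a x ∧ anc f y b) := by
  induction h using Relation.ReflTransGen.head_induction_on with
  | refl => exact .inl .refl
  | @head a c hac _ ih =>
    rcases eq_some_or_of_update_some_eq_some hac with ⟨rfl, rfl⟩ | hac
    · exact .inr ⟨.refl, ih.elim id fun h => absurd h.1 hyx⟩
    · exact ih.imp (.head hac) fun h => ⟨.head hac h.1, h.2⟩

theorem IsRForest.update_none [Finite V] (hf : IsRForest E f) (c : V) :
    IsRForest E (update f c none) :=
  ⟨isForest_of_forall_not_anc fun _ _ hab hba =>
      hf.1.not_anc_of_eq_some (eq_some_of_update_none_eq_some hab) (anc_of_anc_update_none hba),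
    fun a b hab => hf.2 a b (eq_some_of_update_none_eq_some hab)⟩

theorem IsRForest.update_some [Finite V] (hf : IsRForest E f) {x y : V} (hxy : E x y)
    (hyx : ¬ anc f y x) :
    IsRForest E (update f x (some y)) := by
  refine ⟨isForest_of_forall_not_anc fun a b hab hba => ?_, fun a b hab => ?_⟩
  · rcases eq_some_or_of_update_some_eq_some hab with ⟨rfl, rfl⟩ | hab
    · exact hyx ((anc_update_some hyx hba).elim id And.left)
    · rcases anc_update_some hyx hba with hba | ⟨hbx, hya⟩
      · exact hf.1.not_anc_of_eq_some hab hba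
      · exact hyx (hya.trans (.head hab hbx))
  · rcases eq_some_or_of_update_some_eq_some hab with ⟨rfl, rfl⟩ | hab
    exacts [hxy, hf.2 a b hab]

variable [Fintype V]

theorem nRoots_update_none {c : V} (hc : f c ≠ none) :
    nRoots (update f c none) = nRoots f + 1 := by
  have hroots : univ.filter (update f c none · = none) = insert c (univ.filter (f · = none)) := by
    ext a
    by_cases hac : a = c <;> simp [hac, update_of_ne]
  rw [nRoots, hroots, card_insert_of_notMem (by simpa using hc), nRoots]

theorem fWeight_eq_mul_fWeight_update_none (w : V → V → ℝ) {c d : V} (hc : f c = some d) :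
    fWeight w f = w c d * fWeight w (update f c none) := by
  have hrest : ∀ a ∈ univ.erase c, (update f c none a).elim 1 (w a) = (f a).elim 1 (w a) :=
    fun a ha => by rw [update_of_ne (ne_of_mem_erase ha)]
  rw [fWeight, fWeight, ← mul_prod_erase _ _ (mem_univ c), ← mul_prod_erase _ _ (mem_univ c),
    prod_congr rfl hrest, hc, update_self]
  simp

theorem nRoots_update_some {x : V} (hx : f x = none) (y : V) :
    nRoots (update f x (some y)) + 1 = nRoots f := by
  simpa [(update_eq_self_iff.2 hx.symm : update f x none = f)] using
    (nRoots_update_none (f := update f x (some y)) (c := x) (by simp)).symm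

theorem fWeight_update_some (w : V → V → ℝ) {x : V} (hx : f x = none) (y : V) :
    fWeight w (update f x (some y)) = w x y * fWeight w f := by
  simpa [(update_eq_self_iff.2 hx.symm : update f x none = f)] using
    fWeight_eq_mul_fWeight_update_none w (f := update f x (some y)) (update_self x (some y) f)

end Surgery

section Reroot

variable {V : Type*} [Fintype V] [DecidableEq V] {E : V → V → Prop}

theorem IsRForest.reverse_edge_to_root (hE : ∀ a b, E a b → E b a) {g : V → Option V}
    (hg : IsRForest E g) {x p : V} (hx : g x = some p) (hp : g p = none) :
    let g' := update (update g x none) p (some x)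
    IsRForest E g' ∧ g' x = none ∧ nRoots g' = nRoots g ∧
      (∀ w : V → V → ℝ, w p x = w x p → fWeight w g' = fWeight w g) ∧
      ∀ a, anc g' a x → anc g a p := by
  intro g'
  have hxp : x ≠ p := by rintro rfl; rw [hx] at hp; cases hp
  have hp' : update g x none p = none := by rw [update_of_ne hxp.symm, hp]
  have hxp' : ¬ anc (update g x none) x p := fun h =>
    hxp ((Relation.ReflTransGen.cases_head h).resolve_right (by simp))
  refine ⟨(hg.update_none x).update_some (hE x p (hg.2 x p hx)) hxp',
    by simp [g', update_of_ne hxp], ?_, fun w hw => ?_, fun a ha => ?_⟩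
  · have h₁ := nRoots_update_some hp' x
    have h₂ := nRoots_update_none (f := g) (c := x) (by simp [hx])
    simp only [g']
    omega
  · rw [fWeight_update_some w hp', hw, ← fWeight_eq_mul_fWeight_update_none w hx]
  · rcases anc_update_some hxp' ha with hax | ⟨hap, -⟩
    · exact (anc_of_anc_update_none hax).tail hx
    · exact anc_of_anc_update_none hap

theorem IsRForest.exists_reroot (hE : ∀ a b, E a b → E b a) {w : V → V → ℝ}
    (hw : ∀ a b, w a b = w b a) {f : V → Option V} (hf : IsRForest E f) (x : V) :
    ∃ g, IsRForest E g ∧ g x = none ∧ nRoots g = nRoots f ∧ fWeight w g = fWeight w f ∧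
      (∀ a, anc g a x → SameTree f a x) ∧ ∀ a, ¬ anc f x a → g a = f a := by
  obtain ⟨n, hn⟩ := hf.1 x
  induction n generalizing x with
  | zero => cases hn
  | succ n ih =>
    cases hfx : f x with
    | none => exact ⟨f, hf, hfx, rfl, rfl, fun a ha => ⟨x, ha, .refl⟩, fun _ _ => rfl⟩
    | some p =>
      rw [iterate_succ_apply, fstep_some, hfx] at hn
      obtain ⟨g, hg, hgp, hgr, hgw, hganc, hgfix⟩ := ih p hn
      have hpx : ¬ anc f p x := hf.1.not_anc_of_eq_some hfx
      obtain ⟨hg', hg'x, hg'r, hg'w, hg'anc⟩ :=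
        hg.reverse_edge_to_root hE ((hgfix x hpx).trans hfx) hgp
      refine ⟨_, hg', hg'x, hg'r.trans hgr, (hg'w w (hw p x)).trans hgw, fun a ha => ?_,
        fun a ha => ?_⟩
      · obtain ⟨z, haz, hpz⟩ := hganc a (hg'anc a ha)
        exact ⟨z, haz, .head hfx hpz⟩
      · have hax : a ≠ x := by rintro rfl; exact ha .refl
        have hap : a ≠ p := by rintro rfl; exact ha (.single hfx)
        rw [update_of_ne hap, update_of_ne hax]
        exact hgfix a fun h => ha (.head hfx h)

end Reroot

section Tree

variable {V : Type*} {f : V → Option V}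

theorem SameTree.symm {x y : V} (h : SameTree f x y) : SameTree f y x :=
  let ⟨z, hxz, hyz⟩ := h
  ⟨z, hyz, hxz⟩

theorem anc.reachable_fromRel {a b : V} (h : anc f a b) :
    (SimpleGraph.fromRel fun u v => f u = some v).Reachable a b := by
  induction h with
  | refl => rfl
  | @tail b c _ hbc ih =>
    by_cases hbc' : b = c
    · rwa [← hbc']
    · exact ih.trans (SimpleGraph.Adj.reachable ⟨hbc', .inl hbc⟩)

theorem SameTree.eq_some_or_eq_some_of_adj {G : SimpleGraph V} (hG : G.IsAcyclic)
    (hf : ∀ a b, f a = some b → G.Adj a b) {x y : V} (hxy : G.Adj x y) (h : SameTree f x y) :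
    f x = some y ∨ f y = some x := by
  obtain ⟨z, hxz, hyz⟩ := h
  obtain ⟨p⟩ := hxz.reachable_fromRel.trans hyz.reachable_fromRel.symm
  have hle : (SimpleGraph.fromRel fun u v => f u = some v) ≤ G := fun a b hab =>
    hab.2.elim (hf a b) fun h => (hf b a h).symm
  have hmem := SimpleGraph.isBridge_iff_forall_walk_mem_edges.1
    (SimpleGraph.isAcyclic_iff_forall_adj_isBridge.1 hG hxy) (p.mapLe hle)
  rw [SimpleGraph.Walk.edges_mapLe_eq_edges] at hmem
  exact (p.adj_of_mem_edges hmem).2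

end Tree

section ForestMeasure

variable {V : Type*} [Fintype V] {E : V → V → Prop} {w : V → V → ℝ} {q : ℝ} {f : V → Option V}

theorem fWeight_nonneg (hw : ∀ a b, E a b → 0 ≤ w a b) (hf : ∀ a b, f a = some b → E a b) :
    0 ≤ fWeight w f :=
  prod_nonneg fun a _ => by
    cases hfa : f a with
    | none => exact zero_le_one
    | some b => exact hw a b (hf a b hfa)

theorem pow_nRoots_mul_fWeight_nonneg (hw : ∀ a b, E a b → 0 ≤ w a b) (hq : 0 ≤ q)
    (hf : IsRForest E f) : 0 ≤ q ^ nRoots f * fWeight w f :=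
  mul_nonneg (pow_nonneg hq _) (fWeight_nonneg hw hf.2)

variable [DecidableEq V]

theorem fMeasure_nonneg (hw : ∀ a b, E a b → 0 ≤ w a b) (hq : 0 ≤ q) (H : Set (V → Option V)) :
    0 ≤ fMeasure E w q H :=
  sum_nonneg fun _ hf => pow_nRoots_mul_fWeight_nonneg hw hq (mem_filter.1 hf).2.1

theorem pow_nRoots_mul_fWeight_le_Zf (hw : ∀ a b, E a b → 0 ≤ w a b) (hq : 0 ≤ q)
    (hf : IsRForest E f) : q ^ nRoots f * fWeight w f ≤ Zf E w q :=
  single_le_sum (f := fun f => q ^ nRoots f * fWeight w f)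
    (fun _ hg => pow_nRoots_mul_fWeight_nonneg hw hq (by simpa using hg))
    (by simp [hf])

theorem Zf_pos (hw : ∀ a b, E a b → 0 ≤ w a b) (hq : 0 < q) : 0 < Zf E w q := by
  have hroots : IsRForest E (fun _ : V => none) := ⟨fun _ => ⟨1, rfl⟩, fun _ _ h => by cases h⟩
  refine lt_of_lt_of_le ?_ (pow_nRoots_mul_fWeight_le_Zf hw hq.le hroots)
  simp [fWeight, hq]

theorem fMeasure_add_fMeasure_not (E : V → V → Prop) (w : V → V → ℝ) (q : ℝ)
    (P : (V → Option V) → Prop) :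
    fMeasure E w q {f | P f} + fMeasure E w q {f | ¬ P f} = Zf E w q := by
  rw [Zf, fMeasure, fMeasure, fMeasure, sum_filter, sum_filter, sum_filter, ← sum_add_distrib]
  refine sum_congr rfl fun f _ => ?_
  by_cases hf : IsRForest E f <;> by_cases hP : P f <;> simp [hf, hP]

theorem fMeasure_mul_le_card_mul {H : Set (V → Option V)} {a b : ℝ} (hb : 0 ≤ b)
    (h : ∀ f, IsRForest E f → f ∈ H → q ^ nRoots f * fWeight w f * a ≤ b) :
    fMeasure E w q H * a ≤ Fintype.card (V → Option V) * b := by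
  rw [fMeasure, sum_mul]
  refine (sum_le_card_nsmul _ _ b fun f hf => ?_).trans ?_
  · exact h f (mem_filter.1 hf).2.1 (mem_filter.1 hf).2.2
  · rw [nsmul_eq_mul]
    exact mul_le_mul_of_nonneg_right (by exact_mod_cast card_filter_le _ _) hb

end ForestMeasure

section Correlation

variable {V : Type*} [Fintype V] [DecidableEq V] {w : V → V → ℝ} {q : ℝ} {f : V → Option V}
  {x y : V}

theorem pow_nRoots_mul_fWeight_mul_le_of_not_sameTree {E : V → V → Prop}
    (hE : ∀ a b, E a b → E b a) (hw : ∀ a b, w a b = w b a) (hw₀ : ∀ a b, E a b → 0 ≤ w a b)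
    (hq : 0 ≤ q) (hf : IsRForest E f) (hxy : E x y) (h : ¬ SameTree f x y) :
    q ^ nRoots f * fWeight w f * w x y ≤ q * Zf E w q := by
  obtain ⟨g, hg, hgx, hgr, hgw, hganc, -⟩ := hf.exists_reroot hE hw x
  have hyx : ¬ anc g y x := fun hyx => h (hganc y hyx).symm
  calc q ^ nRoots f * fWeight w f * w x y
      = q * (q ^ nRoots (update g x (some y)) * fWeight w (update g x (some y))) := by
        rw [← hgr, ← hgw, ← nRoots_update_some hgx y, fWeight_update_some w hgx]
        ring
    _ ≤ q * Zf E w q :=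
        mul_le_mul_of_nonneg_left (pow_nRoots_mul_fWeight_le_Zf hw₀ hq (hg.update_some hxy hyx)) hq

theorem pow_nRoots_mul_fWeight_mul_le_of_sameTree {G : SimpleGraph V} (hG : G.IsAcyclic)
    (hw : ∀ a b, w a b = w b a) (hw₀ : ∀ a b, G.Adj a b → 0 ≤ w a b) (hq : 0 ≤ q)
    (hf : IsRForest G.Adj f) (hxy : G.Adj x y) (h : SameTree f x y) :
    q ^ nRoots f * fWeight w f * q ≤ w x y * Zf G.Adj w q := by
  obtain ⟨c, d, hcd, hwcd⟩ : ∃ c d, f c = some d ∧ w c d = w x y := by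
    rcases h.eq_some_or_eq_some_of_adj hG hf.2 hxy with hxy' | hyx'
    exacts [⟨x, y, hxy', rfl⟩, ⟨y, x, hyx', hw y x⟩]
  calc q ^ nRoots f * fWeight w f * q
      = w c d * (q ^ nRoots (update f c none) * fWeight w (update f c none)) := by
        rw [nRoots_update_none (by simp [hcd]), fWeight_eq_mul_fWeight_update_none w hcd]
        ring
    _ ≤ w x y * Zf G.Adj w q := by
        rw [← hwcd]
        exact mul_le_mul_of_nonneg_left (pow_nRoots_mul_fWeight_le_Zf hw₀ hq (hf.update_none c))
          (hw₀ c d (hf.2 c d hcd))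

theorem Ucorr_nonneg {E : V → V → Prop} (hw₀ : ∀ a b, E a b → 0 ≤ w a b) (hq : 0 ≤ q) :
    0 ≤ Ucorr E w q x y :=
  div_nonneg (fMeasure_nonneg hw₀ hq _) (fMeasure_nonneg hw₀ hq _)

theorem Ucorr_le_card_mul_div {E : V → V → Prop} (hE : ∀ a b, E a b → E b a)
    (hw : ∀ a b, w a b = w b a) (hw₀ : ∀ a b, E a b → 0 ≤ w a b) (hq : 0 < q) (hxy : E x y)
    (hwxy : 0 < w x y) :
    Ucorr E w q x y ≤ Fintype.card (V → Option V) * (q / w x y) := by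
  have hM := fMeasure_mul_le_card_mul (H := {f | ¬ SameTree f x y})
    (mul_nonneg hq.le (Zf_pos hw₀ hq).le) fun f hf h =>
    pow_nRoots_mul_fWeight_mul_le_of_not_sameTree (w := w) hE hw hw₀ hq.le hf hxy h
  rw [Ucorr, fProb, ← mul_div_assoc, div_le_div_iff₀ (Zf_pos hw₀ hq) hwxy]
  linarith

theorem one_sub_Ucorr_le_card_mul_div {G : SimpleGraph V} (hG : G.IsAcyclic)
    (hw : ∀ a b, w a b = w b a) (hw₀ : ∀ a b, G.Adj a b → 0 ≤ w a b) (hq : 0 < q)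
    (hxy : G.Adj x y) :
    1 - Ucorr G.Adj w q x y ≤ Fintype.card (V → Option V) * (w x y / q) := by
  have hZ := Zf_pos hw₀ hq
  have hM := fMeasure_mul_le_card_mul (H := {f | SameTree f x y})
    (mul_nonneg (hw₀ x y hxy) hZ.le) fun f hf h =>
    pow_nRoots_mul_fWeight_mul_le_of_sameTree hG hw hw₀ hq.le hf hxy h
  have hsame : Zf G.Adj w q - fMeasure G.Adj w q {f | ¬ SameTree f x y}
      = fMeasure G.Adj w q {f | SameTree f x y} := by
    linarith [fMeasure_add_fMeasure_not G.Adj w q (SameTree · x y)]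
  rw [Ucorr, fProb, one_sub_div hZ.ne', hsame, ← mul_div_assoc, div_le_div_iff₀ hZ hq]
  linarith

theorem Ucorr_le_one {E : V → V → Prop} (hw₀ : ∀ a b, E a b → 0 ≤ w a b) (hq : 0 ≤ q) :
    Ucorr E w q x y ≤ 1 := by
  have hsplit := fMeasure_add_fMeasure_not E w q (SameTree · x y)
  refine div_le_one_of_le₀ ?_ (fMeasure_nonneg hw₀ hq _)
  linarith [fMeasure_nonneg hw₀ hq {f | SameTree f x y}]

end Correlation

open Filter Asymptotics in
theorem tree_bounded_vertices_asymptotics_general {V : Type*} [Fintype V] [DecidableEq V]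
    (G : SimpleGraph V) (htree : G.IsTree)
    (w : ℕ → V → V → ℝ)
    (hsymm : ∀ n a b, w n a b = w n b a)
    (hpos : ∀ n a b, G.Adj a b → 0 < w n a b)
    (q : ℕ → ℝ) (hq : ∀ n, 0 < q n)
    (x y : V) (hadj : G.Adj x y) :
    ((q =o[atTop] fun n => w n x y) →
      Tendsto (fun n => Ucorr G.Adj (w n) (q n) x y) atTop (nhds 0)) ∧
    (((fun n => w n x y) =o[atTop] q) →
      Tendsto (fun n => Ucorr G.Adj (w n) (q n) x y) atTop (nhds 1)) := by
  have hw₀ : ∀ n a b, G.Adj a b → 0 ≤ w n a b := fun n a b h => (hpos n a b h).le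
  have hwxy : ∀ n, w n x y ≠ 0 := fun n => (hpos n x y hadj).ne'
  constructor
  · intro hqw
    have hratio := (isLittleO_iff_tendsto fun n h => absurd h (hwxy n)).1 hqw
    refine squeeze_zero (fun n => Ucorr_nonneg (hw₀ n) (hq n).le)
      (fun n => Ucorr_le_card_mul_div (fun _ _ h => h.symm) (hsymm n) (hw₀ n) (hq n) hadj
        (hpos n x y hadj)) ?_
    simpa using hratio.const_mul (Fintype.card (V → Option V) : ℝ)
  · intro hwq
    have hratio := (isLittleO_iff_tendsto fun n h => absurd h (hq n).ne').1 hwq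
    have hcompl : Tendsto (fun n => 1 - Ucorr G.Adj (w n) (q n) x y) atTop (nhds 0) := by
      refine squeeze_zero (fun n => sub_nonneg.2 (Ucorr_le_one (hw₀ n) (hq n).le))
        (fun n => one_sub_Ucorr_le_card_mul_div htree.isAcyclic (hsymm n) (hw₀ n) (hq n) hadj) ?_
      simpa using hratio.const_mul (Fintype.card (V → Option V) : ℝ)
    simpa using (tendsto_const_nhds (x := (1 : ℝ))).sub hcompl

open Filter Asymptotics in
/-- **Asymptotic correlation in undirected trees with a bounded number of vertices.**
`G = (V,E)` is a fixed finite undirected tree, `w_n : E → (0,∞)` a sequence of (symmetric)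
edge weight functions, `q_n > 0` intensity parameters such that `w_n(e)/q_n` converges in
`[0,∞]` for every edge `e`, and `x, y` adjacent vertices. Then `U_{q_n}(x,y) → 0` if
`q_n = o(w_n(x,y))` and `U_{q_n}(x,y) → 1` if `q_n = ω(w_n(x,y))`. -/
theorem tree_bounded_vertices_asymptotics {V : Type*} [Fintype V] [DecidableEq V]
    (G : SimpleGraph V) (htree : G.IsTree)
    (w : ℕ → V → V → ℝ)
    (hsymm : ∀ n a b, w n a b = w n b a)
    (hpos : ∀ n a b, G.Adj a b → 0 < w n a b)
    (q : ℕ → ℝ) (hq : ∀ n, 0 < q n)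
    (hlim : ∀ a b, G.Adj a b → ∃ l : ENNReal,
      Tendsto (fun n => ENNReal.ofReal (w n a b / q n)) atTop (nhds l))
    (x y : V) (hadj : G.Adj x y) :
    ((q =o[atTop] fun n => w n x y) →
      Tendsto (fun n => Ucorr G.Adj (w n) (q n) x y) atTop (nhds 0)) ∧
    (((fun n => w n x y) =o[atTop] q) →
      Tendsto (fun n => Ucorr G.Adj (w n) (q n) x y) atTop (nhds 1)) :=
  tree_bounded_vertices_asymptotics_general G htree w hsymm hpos q hq x y hadj
end

section
/- Let BG_{n,m} be the bottleneck graph: the undirected graph consisting of two disjoint complete graphs on n and m vertices, connected by a single bridge edge, where the bridge has weight w>0 and all other edges have weight 1. Then its partition function is Z(q) = q·( q(q+n)(q+m) + w(q+1)(2q+n+m) )·(q+n)^{n−2}·(q+m)^{m−2}. -/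
/-!
Off the bridge, `q·I - L` is `(q+n)·I - J` on the first clique and `(q+m)·I - J` on the second
(`J` the all-ones matrix), while the bridge contributes `w·b·bᵀ` with `b = e_{n-1} - e_n`. Hence
`q·I - L = D + U·V` with `D` diagonal and `U·V` of rank three, and the matrix determinant lemma
turns `det (q·I - L)` into `det D = (q+n)^n (q+m)^m` times the determinant of an explicit
`3 × 3` matrix.
-/

open Classical Finset

noncomputable section

/-- The bottleneck graph `BG_{n,m}`: two disjoint cliques, on the vertices with labels
`< n` and on those with labels `≥ n`, joined by the single bridge edge between the
vertices with labels `n-1` and `n`. -/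
def bgAdj (n m : ℕ) : Fin (n + m) → Fin (n + m) → Prop := fun i j =>
  i ≠ j ∧ (((i : ℕ) < n ∧ (j : ℕ) < n) ∨ (n ≤ (i : ℕ) ∧ n ≤ (j : ℕ)) ∨
    ((i : ℕ) = n - 1 ∧ (j : ℕ) = n) ∨ ((i : ℕ) = n ∧ (j : ℕ) = n - 1))

/-- Weight function of the bottleneck graph: intra-clique edges have weight `1`, the
bridge has weight `wv`. -/
def bgW (n m : ℕ) (wv : ℝ) : Fin (n + m) → Fin (n + m) → ℝ := fun i j =>
  if ((i : ℕ) < n ∧ (j : ℕ) < n) ∨ (n ≤ (i : ℕ) ∧ n ≤ (j : ℕ)) then 1 else wv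

theorem Matrix.det_diagonal_add_mul {ι κ K : Type*} [Fintype ι] [DecidableEq ι] [Fintype κ]
    [DecidableEq κ] [Field K] {d : ι → K} (hd : ∀ i, d i ≠ 0) (U : Matrix ι κ K)
    (V : Matrix κ ι K) :
    (Matrix.diagonal d + U * V).det = (∏ i, d i) * (1 + V * Matrix.diagonal d⁻¹ * U).det := by
  have hfactor :
      Matrix.diagonal d + U * V = Matrix.diagonal d * (1 + Matrix.diagonal d⁻¹ * U * V) := by
    rw [Matrix.mul_add, Matrix.mul_one, ← Matrix.mul_assoc, ← Matrix.mul_assoc,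
      Matrix.diagonal_mul_diagonal]
    simp [hd]
  rw [hfactor, Matrix.det_mul, Matrix.det_diagonal, Matrix.det_one_add_mul_comm, Matrix.mul_assoc]

theorem Fin.sum_ite_val_lt {M : Type*} [AddCommMonoid M] (n m : ℕ) (c : M) :
    ∑ x : Fin (n + m), (if (x : ℕ) < n then c else 0) = n • c := by
  rw [Finset.sum_ite, Finset.sum_const_zero, add_zero, Finset.sum_const, Fin.card_filter_val_lt]
  simp

theorem Fin.sum_ite_le_val {M : Type*} [AddCommMonoid M] (n m : ℕ) (c : M) :
    ∑ x : Fin (n + m), (if n ≤ (x : ℕ) then c else 0) = m • c := by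
  have hlt (x : Fin n) : ¬ n ≤ (x : ℕ) := Nat.not_le.mpr x.is_lt
  simp [Fin.sum_univ_add, hlt]

theorem Fin.sum_ite_val_eq {M : Type*} [AddCommMonoid M] {N k : ℕ} (hk : k < N) (c : M) :
    ∑ x : Fin N, (if (x : ℕ) = k then c else 0) = c := by
  rw [Fintype.sum_eq_single ⟨k, hk⟩ fun x hx => if_neg fun h => hx (Fin.ext h), if_pos rfl]

namespace Bottleneck

variable (n m : ℕ)

def diag (q : ℝ) : Fin (n + m) → ℝ := fun x => if (x : ℕ) < n then q + n else q + m

def leftIndicator : Fin (n + m) → ℝ := fun x => if (x : ℕ) < n then 1 else 0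

def rightIndicator : Fin (n + m) → ℝ := fun x => if n ≤ (x : ℕ) then 1 else 0

def bridgeVec : Fin (n + m) → ℝ := fun x =>
  (if (x : ℕ) = n - 1 then 1 else 0) - (if (x : ℕ) = n then 1 else 0)

def lowRankCols : Matrix (Fin (n + m)) (Fin 3) ℝ :=
  (Matrix.of ![leftIndicator n m, rightIndicator n m, bridgeVec n m]).transpose

def lowRankRows (w : ℝ) : Matrix (Fin 3) (Fin (n + m)) ℝ :=
  Matrix.of ![-leftIndicator n m, -rightIndicator n m, w • bridgeVec n m]

variable {n m}

lemma sum_bgW_adj (hn : 1 ≤ n) (hm : 1 ≤ m) (w : ℝ) (x : Fin (n + m)) :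
    ∑ z, (if bgAdj n m x z ∧ x ≠ z then bgW n m w x z else 0)
      = (if (x : ℕ) < n then (n : ℝ) - 1 else (m : ℝ) - 1)
        + (if (x : ℕ) = n - 1 then w else 0) + (if (x : ℕ) = n then w else 0) := by
  have hsummand (z : Fin (n + m)) :
      (if bgAdj n m x z ∧ x ≠ z then bgW n m w x z else 0) =
      (if (x : ℕ) < n then (if (z : ℕ) < n then (1 : ℝ) else 0)
        else (if n ≤ (z : ℕ) then 1 else 0))
      - (if (z : ℕ) = x then 1 else 0)
      + (if (x : ℕ) = n - 1 then (if (z : ℕ) = n then w else 0) else 0)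
      + (if (x : ℕ) = n then (if (z : ℕ) = n - 1 then w else 0) else 0) := by
    simp only [bgAdj, bgW, ne_eq, Fin.ext_iff]
    split_ifs <;> first | (exfalso; omega) | norm_num
  simp only [hsummand, Finset.sum_add_distrib, Finset.sum_sub_distrib]
  split_ifs <;> simp only [Fin.sum_ite_val_lt, Fin.sum_ite_le_val, Fin.sum_ite_val_eq x.is_lt,
    Fin.sum_ite_val_eq (show n < n + m by omega), Fin.sum_ite_val_eq (show n - 1 < n + m by omega),
    Finset.sum_const_zero, nsmul_eq_mul] <;> first | (exfalso; omega) | ring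

lemma smul_one_sub_lapOf (hn : 1 ≤ n) (hm : 1 ≤ m) (w q : ℝ) :
    q • (1 : Matrix (Fin (n + m)) (Fin (n + m)) ℝ) - lapOf (bgAdj n m) (bgW n m w)
      = Matrix.diagonal (diag n m q) + lowRankCols n m * lowRankRows n m w := by
  ext x y
  simp only [lapOf, Matrix.sub_apply, Matrix.smul_apply, Matrix.add_apply, Matrix.mul_apply,
    Fin.sum_univ_three, Matrix.one_apply, Matrix.diagonal_apply, smul_eq_mul, lowRankCols,
    lowRankRows, Matrix.transpose_apply, Matrix.of_apply, Matrix.cons_val_zero,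
    Matrix.cons_val_one, Matrix.cons_val_two, Matrix.head_cons, Matrix.tail_cons, Pi.neg_apply,
    Pi.smul_apply, sum_bgW_adj hn hm, diag, leftIndicator, rightIndicator, bridgeVec]
  by_cases hxy : x = y
  · subst hxy
    simp only [if_true, ne_eq, not_true_eq_false, and_false, if_false]
    split_ifs <;> first | (exfalso; omega) | ring
  · have hxy' : (x : ℕ) ≠ y := fun h => hxy (Fin.ext h)
    simp only [hxy, if_false, ne_eq, not_false_eq_true, and_true, true_and, bgAdj, bgW]
    split_ifs <;> first | (exfalso; omega) | ring

lemma lowRankRows_mul_inv_mul_lowRankCols (hn : 1 ≤ n) (hm : 1 ≤ m) (w q : ℝ) :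
    lowRankRows n m w * Matrix.diagonal (diag n m q)⁻¹ * lowRankCols n m =
      !![-n / (q + n), 0, -1 / (q + n);
         0, -m / (q + m), 1 / (q + m);
         w / (q + n), -w / (q + m), w / (q + n) + w / (q + m)] := by
  have hlt (i : Fin n) : ¬ n ≤ (i : ℕ) := Nat.not_le.mpr i.is_lt
  have hne (i : Fin n) : (i : ℕ) ≠ n := i.is_lt.ne
  have hne' (j : Fin m) : n + (j : ℕ) ≠ n - 1 := by omega
  ext i j
  rw [Matrix.mul_apply]
  simp only [Matrix.mul_diagonal, Fin.sum_univ_add]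
  fin_cases i <;> fin_cases j <;>
    simp +contextual [lowRankRows, lowRankCols, diag, leftIndicator, rightIndicator, bridgeVec,
      hlt, hne, hne', Fin.sum_ite_val_eq (show n - 1 < n by omega), Fin.sum_ite_val_eq hm,
      div_eq_mul_inv]

lemma prod_diag (q : ℝ) : ∏ x, diag n m q x = (q + n) ^ n * (q + m) ^ m := by
  simp [Fin.prod_univ_add, diag]

end Bottleneck

theorem bottleneck_partition_general (n m : ℕ) (hn : 1 ≤ n) (hm : 1 ≤ m)
    (w q : ℝ) (hq : 0 < q) :
    Zdet (bgAdj n m) (bgW n m w) q =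
      q * (q * (q + (n : ℝ)) * (q + (m : ℝ)) +
          w * (q + 1) * (2 * q + (n : ℝ) + (m : ℝ))) *
        (q + (n : ℝ)) ^ ((n : ℤ) - 2) * (q + (m : ℝ)) ^ ((m : ℤ) - 2) := by
  have hqn : q + n ≠ 0 := by positivity
  have hqm : q + m ≠ 0 := by positivity
  have hdiag (x : Fin (n + m)) : Bottleneck.diag n m q x ≠ 0 := by
    unfold Bottleneck.diag; split_ifs <;> assumption
  rw [Zdet, Bottleneck.smul_one_sub_lapOf hn hm, Matrix.det_diagonal_add_mul hdiag,
    Bottleneck.prod_diag, Bottleneck.lowRankRows_mul_inv_mul_lowRankCols hn hm,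
    Matrix.det_fin_three, zpow_sub₀ hqn, zpow_sub₀ hqm, zpow_natCast, zpow_natCast]
  simp only [Matrix.add_apply, Matrix.one_apply_eq, Matrix.one_apply_ne, Matrix.of_apply,
    Matrix.cons_val', Matrix.cons_val_zero, Matrix.cons_val_one, Matrix.cons_val,
    Matrix.cons_val_fin_one, ne_eq, Fin.reduceEq, not_false_eq_true, zpow_ofNat]
  field_simp
  ring

/-- **Partition function of the bottleneck graph.** For `q > 0`,
`Z(q) = q (q(q+n)(q+m) + w(q+1)(2q+n+m)) (q+n)^{n-2} (q+m)^{m-2}`. -/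
theorem bottleneck_partition (n m : ℕ) (hn : 1 ≤ n) (hm : 1 ≤ m)
    (w q : ℝ) (hw : 0 < w) (hq : 0 < q) :
    Zdet (bgAdj n m) (bgW n m w) q =
      q * (q * (q + (n : ℝ)) * (q + (m : ℝ)) +
          w * (q + 1) * (2 * q + (n : ℝ) + (m : ℝ))) *
        (q + (n : ℝ)) ^ ((n : ℤ) - 2) * (q + (m : ℝ)) ^ ((m : ℤ) - 2) :=
  bottleneck_partition_general n m hn hm w q hq

end
end

section
/- Let G=(V,E,w) be a finite weighted directed graph and e∈E a directed edge. Then the partition function satisfies the deletion–contraction identity Z_G(q) = Z_{G−e}(q) + w(e)·Z_{G/e}(q) for all q>0, where G−e is the graph with edge e removed and G/e is the directed e-contraction of G. -/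
open Classical Finset Filter

noncomputable section

variable {V : Type*} [Fintype V] [DecidableEq V]

/-- The directed edge contraction `G/e` over the directed edge `e = (x,y)`:
all outgoing edges of `x` are removed and `x` is merged into `y`
(realised on the vertex set `{v // v ≠ x}`); outgoing edges from `y` and ingoing edges to
both `x` and `y` are retained, the ingoing edges of `x` being redirected to `y`. -/
def contrE (E : V → V → Prop) (x y : V) :
    {v : V // v ≠ x} → {v : V // v ≠ x} → Prop := fun u v =>
  u ≠ v ∧ (E u.1 v.1 ∨ (E u.1 x ∧ v.1 = y))

/-- The weight function of the directed edge contraction `G/e`, `e = (x,y)`: parallel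
edges arising from the contraction are merged by adding their weights. -/
def contrW (E : V → V → Prop) (w : V → V → ℝ) (x y : V) :
    {v : V // v ≠ x} → {v : V // v ≠ x} → ℝ := fun u v =>
  (if E u.1 v.1 ∧ u.1 ≠ v.1 then w u.1 v.1 else 0) +
    (if v.1 = y ∧ E u.1 x then w u.1 x else 0)

/-! A spanning rooted forest is a parent map `f : V → Option V` without cycles, and
`q ^ r(F) w(F) = ∏_u c(u, f u)` with `c(u, none) = q` and `c(u, some v) = w(u,v)` when `(u,v)` is
an edge (`0` otherwise), so `Z_G(q)` is the sum of this product over all acyclic parent maps.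
Forests with `f x ≠ some y` are the forests of `G − e`. Redirecting to `y` every pointer into `x`
and dropping `x` sends a forest with `f x = some y` to a forest of `G/e` (acyclicity is preserved
in both directions), and the fibre over a forest `f'` of `G/e` is a product set: `x` points to
`y`, and a vertex pointing to `y` in `f'` points to `x` or to `y`. Summing the product weight over
the fibre therefore gives `w(x,y)` times the weight of `f'` in `G/e`, whose merged edge weights are
`w(u,y) + w(u,x)`. -/

theorem Finset.sum_prod_eq_mul_prod_sum_of_pinned {ι κ R : Type*} [Fintype ι] [DecidableEq ι]
    [Fintype κ] [CommSemiring R] (i : ι) (a : κ) (t : {j // j ≠ i} → Finset κ) (c : ι → κ → R)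
    (F : Finset (ι → κ)) (hF : ∀ f, f ∈ F ↔ f i = a ∧ ∀ j : {j // j ≠ i}, f j ∈ t j) :
    ∑ f ∈ F, ∏ j, c j (f j) = c i a * ∏ j : {j // j ≠ i}, ∑ k ∈ t j, c j k := by
  let s : ι → Finset κ := fun j => if h : j = i then {a} else t ⟨j, h⟩
  have hs : F = Fintype.piFinset s := by
    ext f
    simp only [hF, Fintype.mem_piFinset, s]
    constructor
    · rintro ⟨hi, ht⟩ j
      by_cases h : j = i
      · simp [h, hi]
      · simpa [h] using ht ⟨j, h⟩
    · intro h
      exact ⟨by simpa using h i, fun j => by simpa [j.2] using h j⟩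
  rw [hs, ← prod_univ_sum, Fintype.prod_eq_mul_prod_subtype_ne _ i]
  congr 1
  · simp [s]
  · exact prod_congr rfl fun j _ => by simp [s, j.2]

section Forest

variable {α : Type*}

theorem isForest_iff_wellFounded (f : α → Option α) :
    IsForest f ↔ WellFounded (fun b a => f a = some b) := by
  constructor
  · intro hf
    refine ⟨fun a => ?_⟩
    obtain ⟨n, hn⟩ := hf a
    induction n generalizing a with
    | zero => simp at hn
    | succ n ih =>
      refine ⟨a, fun b hb => ih b ?_⟩
      rwa [Function.iterate_succ_apply, fstep, Option.bind_some, hb] at hn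
  · intro hwf a
    induction a using hwf.induction with
    | _ a ih =>
      cases hfa : f a with
      | none => exact ⟨1, by simp [fstep, hfa]⟩
      | some b =>
        obtain ⟨n, hn⟩ := ih b hfa
        exact ⟨n + 1, by rwa [Function.iterate_succ_apply, fstep, Option.bind_some, hfa]⟩

theorem IsForest.apply_ne_self {f : α → Option α} (hf : IsForest f) (a : α) : f a ≠ some a :=
  ((isForest_iff_wellFounded f).1 hf).irrefl.irrefl a

def parentWeight (E : α → α → Prop) (w : α → α → ℝ) (q : ℝ) (u : α) (o : Option α) : ℝ :=
  o.elim q fun v => if E u v then w u v else 0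

theorem parentWeight_deleteEdge (E : α → α → Prop) (w : α → α → ℝ) (q : ℝ) (x y u : α)
    (o : Option α) :
    parentWeight (fun a b => E a b ∧ ¬(a = x ∧ b = y)) w q u o =
      if u = x ∧ o = some y then 0 else parentWeight E w q u o := by
  cases o
  · simp [parentWeight]
  · simp only [parentWeight]
    split_ifs <;> simp_all

variable (x y : α) (hxy : x ≠ y)

def contrVertex (v : α) : {v : α // v ≠ x} :=
  if hv : v = x then ⟨y, hxy.symm⟩ else ⟨v, hv⟩

@[simp]
theorem contrVertex_self : contrVertex x y hxy x = ⟨y, hxy.symm⟩ := dif_pos rfl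

theorem contrVertex_of_ne {v : α} (hv : v ≠ x) : contrVertex x y hxy v = ⟨v, hv⟩ := dif_neg hv

@[simp]
theorem contrVertex_val (v : {v : α // v ≠ x}) : contrVertex x y hxy v = v :=
  contrVertex_of_ne x y hxy v.2

def contrForest (f : α → Option α) (u : {v : α // v ≠ x}) : Option {v : α // v ≠ x} :=
  (f u).map (contrVertex x y hxy)

variable {x y} {f : α → Option α}

theorem wellFounded_contrForest (hf : WellFounded (fun b a => f a = some b))
    (hfx : f x = some y) :
    WellFounded (fun b a => contrForest x y hxy f a = some b) := by
  -- induct over all of `α`, so that `x`, whose image is that of its parent `y`, is covered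
  suffices h : ∀ a, Acc (fun b a => contrForest x y hxy f a = some b) (contrVertex x y hxy a) from
    ⟨fun u => by simpa using h u⟩
  intro a
  induction a using hf.induction with
  | _ a ih =>
    by_cases ha : a = x
    · have := ih y (ha ▸ hfx)
      rw [contrVertex_of_ne x y hxy hxy.symm, ← contrVertex_self x y hxy] at this
      exact ha ▸ this
    · refine ⟨_, fun b' hb' => ?_⟩
      rw [contrVertex_of_ne x y hxy ha, contrForest, Option.map_eq_some_iff] at hb'
      obtain ⟨b, hb, rfl⟩ := hb'
      exact ih b hb

theorem wellFounded_of_contrForest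
    (hf : WellFounded (fun b a => contrForest x y hxy f a = some b)) (hfx : f x = some y) :
    WellFounded (fun b a => f a = some b) := by
  have acc_x : Acc (fun b a => f a = some b) y → Acc (fun b a => f a = some b) x :=
    fun hy => ⟨_, fun b hb => Option.some_inj.1 (hfx.symm.trans hb) ▸ hy⟩
  have acc_of_ne : ∀ u : {v : α // v ≠ x}, Acc (fun b a => f a = some b) u := by
    intro u
    induction u using hf.induction with
    | _ u ih =>
      refine ⟨_, fun b hb => ?_⟩
      have hu : contrForest x y hxy f u = some (contrVertex x y hxy b) := by
        simp [contrForest, hb]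
      by_cases hbx : b = x
      · exact hbx ▸ acc_x (ih _ (by rwa [hbx, contrVertex_self] at hu))
      · exact ih _ (by rwa [contrVertex_of_ne x y hxy hbx] at hu)
  refine ⟨fun a => ?_⟩
  by_cases ha : a = x
  · exact ha ▸ acc_x (acc_of_ne ⟨y, hxy.symm⟩)
  · exact acc_of_ne ⟨a, ha⟩

theorem isForest_contrForest_iff (hfx : f x = some y) :
    IsForest (contrForest x y hxy f) ↔ IsForest f := by
  simp only [isForest_iff_wellFounded]
  exact ⟨fun h => wellFounded_of_contrForest hxy h hfx,
    fun h => wellFounded_contrForest hxy h hfx⟩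

theorem contrVertex_eq_iff (b : α) (v : {v : α // v ≠ x}) :
    contrVertex x y hxy b = v ↔ b = v ∨ (b = x ∧ (v : α) = y) := by
  by_cases hb : b = x
  · subst hb
    simp [Subtype.ext_iff, eq_comm, v.2.symm]
  · simp [contrVertex_of_ne x y hxy hb, Subtype.ext_iff, hb]

end Forest

theorem prod_parentWeight (E : V → V → Prop) (w : V → V → ℝ) (q : ℝ) (f : V → Option V) :
    ∏ u, parentWeight E w q u (f u) =
      if ∀ u v, f u = some v → E u v then q ^ nRoots f * fWeight w f else 0 := by
  split_ifs with hE
  · have factor : ∀ u, parentWeight E w q u (f u) =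
        (if f u = none then q else 1) * (f u).elim 1 (fun v => w u v) := by
      intro u
      cases hfu : f u with
      | none => simp [parentWeight]
      | some v => simp [parentWeight, hE u v hfu]
    rw [prod_congr rfl fun u _ => factor u, prod_mul_distrib, prod_ite, prod_const, prod_const_one,
      mul_one, nRoots, fWeight]
  · push Not at hE
    obtain ⟨u, v, huv, hnE⟩ := hE
    exact prod_eq_zero (mem_univ u) (by simp [parentWeight, huv, hnE])

theorem Zf_eq_sum_prod_parentWeight (E : V → V → Prop) (w : V → V → ℝ) (q : ℝ) :
    Zf E w q = ∑ f ∈ univ.filter IsForest, ∏ u, parentWeight E w q u (f u) := by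
  simp only [prod_parentWeight, ← sum_filter, filter_filter, Zf, fMeasure, IsRForest,
    Set.mem_univ, and_true]

theorem Zf_deleteEdge (E : V → V → Prop) (w : V → V → ℝ) (q : ℝ) (x y : V) :
    Zf (fun a b => E a b ∧ ¬(a = x ∧ b = y)) w q =
      ∑ f ∈ univ.filter (fun f => IsForest f ∧ f x ≠ some y), ∏ u, parentWeight E w q u (f u) := by
  rw [Zf_eq_sum_prod_parentWeight, ← filter_filter]
  conv_rhs => rw [sum_filter]
  refine sum_congr rfl fun f _ => ?_
  simp only [parentWeight_deleteEdge]
  split_ifs with hfx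
  · exact prod_congr rfl fun u _ => if_neg fun ⟨hu, hfu⟩ => hfx (hu ▸ hfu)
  · exact prod_eq_zero (mem_univ x) (if_pos ⟨rfl, not_not.1 hfx⟩)

theorem sum_parentWeight_contrVertex (E : V → V → Prop) (w : V → V → ℝ) (q : ℝ) {x y : V}
    (hxy : x ≠ y) (u : {v : V // v ≠ x}) (o' : Option {v : V // v ≠ x}) (hu : o' ≠ some u) :
    ∑ o ∈ univ.filter (fun o : Option V => o.map (contrVertex x y hxy) = o'),
        parentWeight E w q u o =
      parentWeight (contrE E x y) (contrW E w x y) q u o' := by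
  rcases o' with _ | v
  · rw [show univ.filter (fun o : Option V => o.map (contrVertex x y hxy) = none) = {none} by
      ext o; cases o <;> simp]
    simp [parentWeight]
  have huv : (u : V) ≠ v := fun h => hu (congrArg some (Subtype.ext h).symm)
  by_cases hvy : (v : V) = y
  · rw [show univ.filter (fun o : Option V => o.map (contrVertex x y hxy) = some v) =
        {some x, some y} by
      ext o; cases o <;> simp [contrVertex_eq_iff, hvy, or_comm],
      sum_pair (by simpa using hxy)]
    have huy : (u : V) ≠ y := hvy ▸ huv
    simp only [parentWeight, contrE, contrW, Option.elim, ne_eq, Subtype.ext_iff, hvy, huy]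
    split_ifs <;> simp_all [add_comm]
  · rw [show univ.filter (fun o : Option V => o.map (contrVertex x y hxy) = some v) =
        {some (v : V)} by
      ext o; cases o <;> simp [contrVertex_eq_iff, hvy]]
    simp only [parentWeight, contrE, contrW, Option.elim, ne_eq, Subtype.ext_iff, hvy, huv]
    split_ifs <;> simp_all

theorem sum_prod_parentWeight_eq_mul_Zf_contr (E : V → V → Prop) (w : V → V → ℝ) (q : ℝ)
    {x y : V} (hxy : x ≠ y) (hE : E x y) :
    ∑ f ∈ univ.filter (fun f => IsForest f ∧ f x = some y), ∏ u, parentWeight E w q u (f u) =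
      w x y * Zf (contrE E x y) (contrW E w x y) q := by
  have maps : ∀ f ∈ univ.filter (fun f => IsForest f ∧ f x = some y),
      contrForest x y hxy f ∈ univ.filter IsForest := by
    intro f hf
    simp only [mem_filter, mem_univ, true_and] at hf ⊢
    exact (isForest_contrForest_iff hxy hf.2).2 hf.1
  rw [Zf_eq_sum_prod_parentWeight, mul_sum, ← sum_fiberwise_of_maps_to maps]
  refine sum_congr rfl fun f' hf' => ?_
  have fiber : ∀ f, f ∈ (univ.filter (fun f => IsForest f ∧ f x = some y)).filter
        (fun f => contrForest x y hxy f = f') ↔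
      f x = some y ∧ ∀ u : {v // v ≠ x},
        f u ∈ univ.filter (fun o => o.map (contrVertex x y hxy) = f' u) := by
    intro f
    simp only [mem_filter, mem_univ, true_and, funext_iff, contrForest]
    constructor
    · rintro ⟨⟨-, hfx⟩, hf⟩
      exact ⟨hfx, hf⟩
    · rintro ⟨hfx, hf⟩
      refine ⟨⟨?_, hfx⟩, hf⟩
      rw [← isForest_contrForest_iff hxy hfx, show contrForest x y hxy f = f' from funext hf]
      exact (mem_filter.1 hf').2
  rw [sum_prod_eq_mul_prod_sum_of_pinned _ _ _ _ _ fiber,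
    show parentWeight E w q x (some y) = w x y from if_pos hE]
  exact congrArg _ (prod_congr rfl fun u _ =>
    sum_parentWeight_contrVertex E w q hxy u (f' u) ((mem_filter.1 hf').2.apply_ne_self u))

theorem deletion_contraction_general (E : V → V → Prop) (w : V → V → ℝ)
    (x y : V) (hxy : x ≠ y) (hE : E x y)
    (q : ℝ) :
    Zf E w q =
      Zf (fun a b => E a b ∧ ¬(a = x ∧ b = y)) w q +
        w x y * Zf (contrE E x y) (contrW E w x y) q := by
  rw [Zf_eq_sum_prod_parentWeight, ← sum_filter_not_add_sum_filter _ (fun f => f x = some y),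
    filter_filter, filter_filter, Zf_deleteEdge, sum_prod_parentWeight_eq_mul_Zf_contr E w q hxy hE]

/-- **Deletion–contraction identity for the partition function.** For a directed edge
`e = (x,y)` of `G` and any `q > 0`: `Z_G(q) = Z_{G-e}(q) + w(e)·Z_{G/e}(q)`. -/
theorem deletion_contraction (E : V → V → Prop) (w : V → V → ℝ)
    (hw : ∀ a b : V, 0 ≤ w a b) (x y : V) (hxy : x ≠ y) (hE : E x y)
    (q : ℝ) (hq : 0 < q) :
    Zf E w q =
      Zf (fun a b => E a b ∧ ¬(a = x ∧ b = y)) w q +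
        w x y * Zf (contrE E x y) (contrW E w x y) q :=
  deletion_contraction_general E w x y hxy hE q

end
end

section
/- Let G=(V,E,w) be a finite weighted directed graph and x∈V a vertex. Let Φ_q be the random spanning rooted forest of G with parameter q>0 and let R_q denote its set of roots. Then the rooting probability q ↦ P(x ∈ R_q) is differentiable and satisfies 0 ≤ d/dq P(x ∈ R_q) ≤ (1/q)·P(x ∈ R_q); in particular, q ↦ P(x ∈ R_q) is non-decreasing. -/
open Classical Finset Filter

noncomputable section

variable {V : Type*} [Fintype V] [DecidableEq V]

/-- The rooting probability `P(x ∈ R_q)`: the probability that `x` is a root of the random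
spanning rooted forest `Φ_q`. -/
def rootProb (E : V → V → Prop) (w : V → V → ℝ) (q : ℝ) (x : V) : ℝ :=
  fProb E w q {f | f x = none}

end

noncomputable section

/-!
Let `L` be the Laplacian of the weighted graph and `K_q(x, z)` the probability that `x` lies in the
tree of `Φ_q` rooted at `z`. The unnormalised kernel `B = Z K_q` satisfies `(q + L) B = q Z`:
detaching `x` from its parent trades the factor `w(x, y)` for a factor `q`, and the remaining
terms cancel under the involution that exchanges the parent of `x` with another vertex `y`.
Hence `K_q = q (q + L)⁻¹`, and differentiating `(q + L) K_q = q` and multiplying by `K_q` (which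
commutes with `q + L`) gives `q K_q' = K_q - K_q²`. Since `K_q` is stochastic and
`K_q(y, x) ≤ K_q(x, x)` (a vertex rooted at `x` forces `x` to be a root),
`0 ≤ (K_q²)(x, x) ≤ K_q(x, x) = P(x ∈ R_q)`.
-/

namespace RootedForest

open Relation Function
open scoped Matrix

section Ancestors

variable {V : Type*} {f g : V → Option V} {a b r r₁ r₂ x y : V}

theorem eq_of_anc_of_isRoot (hr : f r = none) (h : anc f r b) : b = r := by
  rcases ReflTransGen.cases_head h with h | ⟨c, hc, -⟩
  · exact h.symm
  · simp [hr] at hc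

theorem isRoot_eq_of_anc (h₁ : anc f a r₁) (hr₁ : f r₁ = none) (h₂ : anc f a r₂)
    (hr₂ : f r₂ = none) : r₁ = r₂ := by
  have hfun : Relator.RightUnique fun u v => f u = some v :=
    fun _ _ _ h h' => Option.some_injective _ (h.symm.trans h')
  rcases ReflTransGen.total_of_right_unique hfun h₁ h₂ with h | h
  · exact (eq_of_anc_of_isRoot hr₁ h).symm
  · exact eq_of_anc_of_isRoot hr₂ h

theorem isForest_iff : IsForest f ↔ ∀ a, ∃ r, anc f a r ∧ f r = none := by
  refine ⟨fun hf a => ?_, fun h a => ?_⟩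
  · obtain ⟨n, hn⟩ := hf a
    induction n generalizing a with
    | zero => simp at hn
    | succ n ih =>
      rw [Function.iterate_succ_apply] at hn
      cases ha : f a with
      | none => exact ⟨a, ReflTransGen.refl, ha⟩
      | some b =>
        obtain ⟨r, hbr, hr⟩ := ih b (by simpa [fstep, ha] using hn)
        exact ⟨r, ReflTransGen.head ha hbr, hr⟩
  · obtain ⟨r, har, hr⟩ := h a
    induction har using ReflTransGen.head_induction_on with
    | refl => exact ⟨1, by simpa [fstep] using hr⟩
    | head hab _ ih =>
      obtain ⟨n, hn⟩ := ih
      exact ⟨n + 1, by rwa [Function.iterate_succ_apply, fstep, Option.bind_some, hab]⟩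

theorem not_anc_of_parent (hf : IsForest f) (h : f x = some y) : ¬ anc f y x := by
  intro hyx
  obtain ⟨r, hyr, hr⟩ := isForest_iff.1 hf y
  -- every vertex reachable from `y` lies on the cycle through `x`, in particular the root `r`
  have hcycle : ∀ v, anc f y v → anc f v x := by
    intro v hv
    induction hv with
    | refl => exact hyx
    | tail _ huv ih =>
      rcases ReflTransGen.cases_head ih with rfl | ⟨c, hc, hcx⟩
      · rwa [Option.some_injective _ (huv.symm.trans h)]
      · rwa [Option.some_injective _ (huv.symm.trans hc)]
  rw [eq_of_anc_of_isRoot hr (hcycle r hyr), hr] at h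
  exact absurd h (by simp)

theorem anc_or_anc_of_eqOn (hfg : ∀ v ≠ x, f v = g v) (h : anc f a b) :
    anc g a b ∨ anc g a x := by
  induction h using ReflTransGen.head_induction_on with
  | refl => exact Or.inl ReflTransGen.refl
  | @head a c hac _ ih =>
    by_cases hax : a = x
    · exact Or.inr (hax ▸ ReflTransGen.refl)
    · rw [hfg a hax] at hac
      exact ih.imp (ReflTransGen.head hac) (ReflTransGen.head hac)

theorem anc_of_eqOn (hfg : ∀ v ≠ x, f v = g v) (h : anc f a b) (hx : ¬ anc f a x) :
    anc g a b :=
  (anc_or_anc_of_eqOn hfg h).resolve_right fun hg =>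
    hx ((anc_or_anc_of_eqOn (fun v hv => (hfg v hv).symm) hg).elim id id)

variable [DecidableEq V]

theorem isForest_update_none (hf : IsForest f) (x : V) : IsForest (update f x none) := by
  have hfg : ∀ v ≠ x, f v = update f x none v := fun v hv => (update_of_ne hv _ _).symm
  refine isForest_iff.2 fun a => ?_
  obtain ⟨r, har, hr⟩ := isForest_iff.1 hf a
  rcases anc_or_anc_of_eqOn hfg har with h | h
  · by_cases hrx : r = x
    · exact ⟨x, hrx ▸ h, update_self x none f⟩
    · exact ⟨r, h, by rwa [← hfg r hrx]⟩
  · exact ⟨x, h, update_self x none f⟩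

theorem isForest_update_some (hf : IsForest f) (h : ¬ anc f y x) :
    IsForest (update f x (some y)) := by
  set g := update f x (some y)
  have hfg : ∀ v ≠ x, f v = g v := fun v hv => (update_of_ne hv _ _).symm
  obtain ⟨r, hyr, hr⟩ := isForest_iff.1 hf y
  have hrx : r ≠ x := by rintro rfl; exact h hyr
  have hgr : g r = none := by rwa [← hfg r hrx]
  have hxr : anc g x r := ReflTransGen.head (update_self x _ f) (anc_of_eqOn hfg hyr h)
  refine isForest_iff.2 fun a => ?_
  obtain ⟨s, has, hs⟩ := isForest_iff.1 hf a
  rcases anc_or_anc_of_eqOn hfg has with h' | h'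
  · by_cases hsx : s = x
    · exact ⟨r, (hsx ▸ h').trans hxr, hgr⟩
    · exact ⟨s, h', by rwa [← hfg s hsx]⟩
  · exact ⟨r, h'.trans hxr, hgr⟩

end Ancestors

section Root

variable {V : Type*} {f g : V → Option V} {a b r x : V}

def root (f : V → Option V) (a : V) : V :=
  if h : ∃ r, anc f a r ∧ f r = none then h.choose else a

theorem root_spec (hf : IsForest f) (a : V) : anc f a (root f a) ∧ f (root f a) = none := by
  have h := isForest_iff.1 hf a
  rw [root, dif_pos h]
  exact h.choose_spec

theorem root_eq_of_anc (h : anc f a r) (hr : f r = none) : root f a = r := by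
  have h' : ∃ r, anc f a r ∧ f r = none := ⟨r, h, hr⟩
  rw [root, dif_pos h']
  exact isRoot_eq_of_anc h'.choose_spec.1 h'.choose_spec.2 h hr

theorem root_eq_self (h : f a = none) : root f a = a := root_eq_of_anc ReflTransGen.refl h

theorem root_eq_self_iff (hf : IsForest f) : root f a = a ↔ f a = none :=
  ⟨fun h => h ▸ (root_spec hf a).2, root_eq_self⟩

theorem root_eq_root_of_anc (hf : IsForest f) (h : anc f a b) : root f a = root f b :=
  root_eq_of_anc (h.trans (root_spec hf b).1) (root_spec hf b).2

theorem root_eq_of_eqOn (hf : IsForest f) (hfg : ∀ v ≠ x, f v = g v) (h : ¬ anc f a x) :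
    root g a = root f a := by
  obtain ⟨har, hr⟩ := root_spec hf a
  have hrx : root f a ≠ x := fun hrx => h (hrx ▸ har)
  exact root_eq_of_anc (anc_of_eqOn hfg har h) (hfg _ hrx ▸ hr)

end Root

section Weight

variable {V : Type*} [Fintype V] {c : V → V → ℝ} {q : ℝ}

def forestWeight (c : V → V → ℝ) (q : ℝ) (f : V → Option V) : ℝ := q ^ nRoots f * fWeight c f

theorem forestWeight_nonneg (hc : ∀ a b, 0 ≤ c a b) (hq : 0 ≤ q) (f : V → Option V) :
    0 ≤ forestWeight c q f := by
  refine mul_nonneg (pow_nonneg hq _) (prod_nonneg fun v _ => ?_)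
  cases f v <;> simp [hc]

variable [DecidableEq V] {f : V → Option V} {x y : V}

theorem nRoots_update_none (h : f x ≠ none) : nRoots (update f x none) = nRoots f + 1 := by
  rw [nRoots, nRoots, ← card_insert_of_notMem (s := univ.filter fun v => f v = none) (a := x)
    (by simpa using h)]
  congr 1
  ext v
  by_cases hv : v = x <;> simp [hv]

theorem nRoots_update_some (h : f x ≠ none) (y : V) : nRoots (update f x (some y)) = nRoots f := by
  unfold nRoots
  congr 1
  ext v
  by_cases hv : v = x <;> simp [hv, h]

theorem fWeight_update_mul (c : V → V → ℝ) (f : V → Option V) (x : V) (o : Option V) :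
    fWeight c (update f x o) * (f x).elim 1 (c x) = fWeight c f * o.elim 1 (c x) := by
  simp only [fWeight, ← mul_prod_erase univ _ (mem_univ x), update_self]
  rw [prod_congr rfl fun v hv => by rw [update_of_ne (ne_of_mem_erase hv)]]
  ring

theorem mul_forestWeight_eq_of_parent (h : f x = some y) :
    q * forestWeight c q f = c x y * forestWeight c q (update f x none) := by
  have hw := fWeight_update_mul c f x none
  simp only [h, Option.elim_some, Option.elim_none, mul_one] at hw
  rw [forestWeight, forestWeight, nRoots_update_none (by simp [h]), pow_succ, ← hw]
  ring

theorem mul_forestWeight_update_some (h : f x = some y) (y' : V) :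
    c x y' * forestWeight c q f = c x y * forestWeight c q (update f x (some y')) := by
  have hw := fWeight_update_mul c f x (some y')
  simp only [h, Option.elim_some] at hw
  rw [forestWeight, forestWeight, nRoots_update_some (by simp [h])]
  linear_combination (-q ^ nRoots f) * hw

end Weight

section Kernel

variable {V : Type*} [Fintype V] [DecidableEq V] {c : V → V → ℝ} {q : ℝ}

def forests : Finset (V → Option V) := univ.filter IsForest

theorem mem_forests {f : V → Option V} : f ∈ forests ↔ IsForest f := by simp [forests]

def partitionFn (c : V → V → ℝ) (q : ℝ) : ℝ := ∑ f ∈ forests, forestWeight c q f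

def rootKernel (c : V → V → ℝ) (q : ℝ) : Matrix V V ℝ :=
  Matrix.of fun a r => ∑ f ∈ forests with root f a = r, forestWeight c q f

theorem rootKernel_mulVec (φ : V → ℝ) (a : V) :
    (rootKernel c q *ᵥ φ) a = ∑ f ∈ forests, forestWeight c q f * φ (root f a) := by
  simp only [Matrix.mulVec, dotProduct, rootKernel, Matrix.of_apply, sum_mul]
  rw [← sum_fiberwise forests (fun f => root f a)]
  exact sum_congr rfl fun r _ => sum_congr rfl fun f hf => by rw [(mem_filter.1 hf).2]

theorem sum_rootKernel_apply (a : V) : ∑ r, rootKernel c q a r = partitionFn c q :=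
  sum_fiberwise forests (fun f => root f a) _

theorem sum_detach (φ : V → ℝ) (x : V) :
    ∑ g ∈ forests with g x ≠ none, q * forestWeight c q g * (φ (root g x) - φ x) =
      ∑ p ∈ univ ×ˢ forests with ¬ anc p.2 p.1 x ∧ p.2 x = none,
        c x p.1 * forestWeight c q p.2 * (φ (root p.2 p.1) - φ (root p.2 x)) := by
  refine sum_nbij' (fun g => ((g x).getD x, update g x none)) (fun p => update p.2 x (some p.1))
    ?_ ?_ ?_ ?_ ?_ <;>
  simp only [mem_filter, mem_product, mem_univ, true_and, mem_forests, Prod.forall, ne_eq,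
    update_self, update_idem, reduceCtorEq, not_false_eq_true, and_true, Prod.mk.injEq]
  · rintro g ⟨hg, hgx⟩
    obtain ⟨y, hy⟩ := Option.ne_none_iff_exists'.1 hgx
    rw [hy, Option.getD_some]
    refine ⟨isForest_update_none hg x, fun h => not_anc_of_parent hg hy ?_⟩
    exact (anc_or_anc_of_eqOn (fun v hv => update_of_ne hv _ _) h).elim id id
  · rintro y f ⟨hf, hyx, -⟩
    exact isForest_update_some hf hyx
  · rintro g ⟨-, hgx⟩
    obtain ⟨y, hy⟩ := Option.ne_none_iff_exists'.1 hgx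
    simp [hy]
  · rintro y f ⟨-, -, hfx⟩
    simp [← hfx]
  · rintro g ⟨hg, hgx⟩
    obtain ⟨y, hy⟩ := Option.ne_none_iff_exists'.1 hgx
    rw [hy, Option.getD_some, root_eq_self (update_self x none g),
      root_eq_root_of_anc hg (ReflTransGen.single hy),
      root_eq_of_eqOn hg (fun v hv => (update_of_ne hv _ _).symm) (not_anc_of_parent hg hy),
      mul_forestWeight_eq_of_parent hy]

theorem sum_swap_eq_zero (φ : V → ℝ) (x : V) :
    ∑ p ∈ univ ×ˢ forests with ¬ anc p.2 p.1 x ∧ p.2 x ≠ none,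
      c x p.1 * forestWeight c q p.2 * (φ (root p.2 p.1) - φ (root p.2 x)) = 0 := by
  set T : V × (V → Option V) → ℝ :=
    fun p => c x p.1 * forestWeight c q p.2 * (φ (root p.2 p.1) - φ (root p.2 x))
  set σ : V × (V → Option V) → V × (V → Option V) :=
    fun p => ((p.2 x).getD x, update p.2 x (some p.1))
  set s := (univ ×ˢ forests).filter fun p : V × (V → Option V) => ¬ anc p.2 p.1 x ∧ p.2 x ≠ none
  have hσ : ∀ p ∈ s, σ p ∈ s ∧ σ (σ p) = p ∧ T p + T (σ p) = 0 := by
    rintro ⟨y, f⟩ hp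
    simp only [s, mem_filter, mem_product, mem_univ, true_and, mem_forests] at hp ⊢
    obtain ⟨hf, hyx, hfx⟩ := hp
    obtain ⟨y₀, hy₀⟩ := Option.ne_none_iff_exists'.1 hfx
    have hf' := isForest_update_some hf hyx
    have hagree : ∀ v ≠ x, f v = update f x (some y) v := fun v hv => (update_of_ne hv _ _).symm
    have hy₀x : ¬ anc (update f x (some y)) y₀ x := fun h => not_anc_of_parent hf hy₀
      ((anc_or_anc_of_eqOn (fun v hv => (hagree v hv).symm) h).elim id id)
    simp only [σ, T, hy₀, Option.getD_some, update_self, update_idem]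
    refine ⟨⟨hf', hy₀x, by simp⟩, by simp [← hy₀], ?_⟩
    rw [root_eq_of_eqOn hf hagree (not_anc_of_parent hf hy₀),
      ← root_eq_root_of_anc hf (ReflTransGen.single hy₀),
      root_eq_root_of_anc hf' (ReflTransGen.single (update_self x (some y) f)),
      root_eq_of_eqOn hf hagree hyx, ← mul_forestWeight_update_some hy₀ y]
    ring
  refine sum_involution (fun p _ => σ p) (fun p hp => (hσ p hp).2.2) (fun p hp hT hfix => hT ?_)
    (fun p hp => (hσ p hp).1) (fun p hp => (hσ p hp).2.1)
  have := (hσ p hp).2.2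
  rw [hfix] at this
  linarith

theorem mul_sum_forestWeight_root_sub (φ : V → ℝ) (x : V) :
    q * ∑ f ∈ forests, forestWeight c q f * (φ (root f x) - φ x) =
      ∑ y, c x y * ∑ f ∈ forests, forestWeight c q f * (φ (root f y) - φ (root f x)) := by
  calc q * ∑ f ∈ forests, forestWeight c q f * (φ (root f x) - φ x)
      = ∑ g ∈ forests with g x ≠ none, q * forestWeight c q g * (φ (root g x) - φ x) := by
        rw [mul_sum, ← sum_filter_of_ne (p := fun g => g x ≠ none)]
        · simp only [mul_assoc]
        · exact fun g _ hg hgx => hg (by rw [root_eq_self hgx]; ring)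
    _ = ∑ p ∈ univ ×ˢ forests with ¬ anc p.2 p.1 x,
          c x p.1 * forestWeight c q p.2 * (φ (root p.2 p.1) - φ (root p.2 x)) := by
        rw [sum_detach, eq_comm, ← sum_filter_add_sum_filter_not _ fun p => p.2 x = none,
          filter_filter, filter_filter, sum_swap_eq_zero, add_zero]
    _ = ∑ p ∈ univ ×ˢ forests,
          c x p.1 * forestWeight c q p.2 * (φ (root p.2 p.1) - φ (root p.2 x)) := by
        refine sum_filter_of_ne fun p hp hT hyx => hT ?_
        rw [root_eq_root_of_anc (mem_forests.1 (mem_product.1 hp).2) hyx]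
        ring
    _ = ∑ y, c x y * ∑ f ∈ forests, forestWeight c q f * (φ (root f y) - φ (root f x)) := by
        rw [sum_product]
        simp only [mul_sum, mul_assoc]

end Kernel

section Laplacian

variable {V : Type*} [Fintype V] [DecidableEq V] {c : V → V → ℝ} {q : ℝ}

def laplacian (c : V → V → ℝ) : Matrix V V ℝ :=
  Matrix.diagonal (fun a => ∑ b, c a b) - Matrix.of c

theorem laplacian_mulVec (u : V → ℝ) (a : V) :
    (laplacian c *ᵥ u) a = ∑ b, c a b * (u a - u b) := by
  rw [laplacian, Matrix.sub_mulVec, Pi.sub_apply, Matrix.mulVec_diagonal]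
  simp [Matrix.mulVec, dotProduct, mul_sub, sum_mul]

theorem smul_one_add_laplacian_mul_rootKernel :
    (q • 1 + laplacian c) * rootKernel c q = (q * partitionFn c q) • 1 := by
  refine Matrix.ext_iff_mulVec.2 fun φ => funext fun a => ?_
  have h := mul_sum_forestWeight_root_sub (c := c) (q := q) φ a
  simp only [mul_sub, sum_sub_distrib, ← sum_mul, ← rootKernel_mulVec] at h
  rw [← Matrix.mulVec_mulVec, Matrix.add_mulVec, Pi.add_apply, laplacian_mulVec,
    Matrix.smul_mulVec, Matrix.one_mulVec, Matrix.smul_mulVec, Matrix.one_mulVec, Pi.smul_apply,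
    Pi.smul_apply, smul_eq_mul, smul_eq_mul, partitionFn]
  simp only [mul_sub, sum_sub_distrib, ← sum_mul]
  linarith

end Laplacian

section Distribution

variable {V : Type*} [Fintype V] [DecidableEq V] {c : V → V → ℝ} {q : ℝ}

def rootDistribution (c : V → V → ℝ) (q : ℝ) : Matrix V V ℝ :=
  (partitionFn c q)⁻¹ • rootKernel c q

theorem partitionFn_pos (hc : ∀ a b, 0 ≤ c a b) (hq : 0 < q) : 0 < partitionFn c q := by
  have hmem : (fun _ => none : V → Option V) ∈ forests :=
    mem_forests.2 (isForest_iff.2 fun a => ⟨a, ReflTransGen.refl, rfl⟩)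
  calc 0 < forestWeight c q (fun _ => none) := by simp [forestWeight, fWeight, hq]
    _ ≤ partitionFn c q :=
      single_le_sum (fun f _ => forestWeight_nonneg hc hq.le f) hmem

theorem partitionFn_nonneg (hc : ∀ a b, 0 ≤ c a b) (hq : 0 ≤ q) : 0 ≤ partitionFn c q :=
  sum_nonneg fun f _ => forestWeight_nonneg hc hq f

theorem rootDistribution_nonneg (hc : ∀ a b, 0 ≤ c a b) (hq : 0 ≤ q) (a b : V) :
    0 ≤ rootDistribution c q a b :=
  mul_nonneg (inv_nonneg.2 (partitionFn_nonneg hc hq))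
    (sum_nonneg fun f _ => forestWeight_nonneg hc hq f)

theorem rootDistribution_le_diag (hc : ∀ a b, 0 ≤ c a b) (hq : 0 ≤ q) (a b : V) :
    rootDistribution c q b a ≤ rootDistribution c q a a := by
  refine mul_le_mul_of_nonneg_left ?_ (inv_nonneg.2 (partitionFn_nonneg hc hq))
  refine sum_le_sum_of_subset_of_nonneg (fun f hf => ?_) fun f _ _ => forestWeight_nonneg hc hq f
  simp only [mem_filter, mem_forests] at hf ⊢
  obtain ⟨hf, rfl⟩ := hf
  exact ⟨hf, root_eq_self (root_spec hf b).2⟩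

theorem sum_rootDistribution_apply (hZ : partitionFn c q ≠ 0) (a : V) :
    ∑ b, rootDistribution c q a b = 1 := by
  simp only [rootDistribution, Matrix.smul_apply, smul_eq_mul, ← mul_sum, sum_rootKernel_apply,
    inv_mul_cancel₀ hZ]

theorem mul_self_rootDistribution_apply_le (hc : ∀ a b, 0 ≤ c a b) (hq : 0 < q) (a : V) :
    (rootDistribution c q * rootDistribution c q) a a ≤ rootDistribution c q a a :=
  calc (rootDistribution c q * rootDistribution c q) a a
      ≤ ∑ b, rootDistribution c q a b * rootDistribution c q a a :=
        sum_le_sum fun b _ => mul_le_mul_of_nonneg_left (rootDistribution_le_diag hc hq.le a b)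
          (rootDistribution_nonneg hc hq.le a b)
    _ = rootDistribution c q a a := by
        rw [← sum_mul, sum_rootDistribution_apply (partitionFn_pos hc hq).ne', one_mul]

theorem mul_self_rootDistribution_apply_nonneg (hc : ∀ a b, 0 ≤ c a b) (hq : 0 ≤ q) (a : V) :
    0 ≤ (rootDistribution c q * rootDistribution c q) a a :=
  sum_nonneg fun b _ => mul_nonneg (rootDistribution_nonneg hc hq a b)
    (rootDistribution_nonneg hc hq b a)

theorem smul_one_add_laplacian_mul_rootDistribution (hZ : partitionFn c q ≠ 0) :
    (q • 1 + laplacian c) * rootDistribution c q = q • 1 := by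
  rw [rootDistribution, Matrix.mul_smul, smul_one_add_laplacian_mul_rootKernel, smul_smul,
    mul_comm q, inv_mul_cancel_left₀ hZ]

end Distribution

section Derivative

theorem mul_eq_smul_one_comm {n K : Type*} [Fintype n] [DecidableEq n] [Field K]
    {A B : Matrix n n K} {a : K} (ha : a ≠ 0) (h : A * B = a • 1) : B * A = a • 1 := by
  have hinv : (a⁻¹ • B) * A = 1 :=
    mul_eq_one_comm.1 (by rw [Matrix.mul_smul, h, smul_smul, inv_mul_cancel₀ ha, one_smul])
  rw [Matrix.smul_mul] at hinv
  rw [← hinv, smul_smul, mul_inv_cancel₀ ha, one_smul]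

theorem hasDerivAt_matrix_mul_apply {𝕜 l m n : Type*} [NontriviallyNormedField 𝕜] [Fintype m]
    {A : 𝕜 → Matrix l m 𝕜} {B : 𝕜 → Matrix m n 𝕜} {A' : Matrix l m 𝕜} {B' : Matrix m n 𝕜}
    {q : 𝕜} (hA : ∀ i j, HasDerivAt (fun p => A p i j) (A' i j) q)
    (hB : ∀ i j, HasDerivAt (fun p => B p i j) (B' i j) q) (i : l) (k : n) :
    HasDerivAt (fun p => (A p * B p) i k) ((A' * B q + A q * B') i k) q := by
  simp only [Matrix.mul_apply, Matrix.add_apply, ← sum_add_distrib]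
  exact HasDerivAt.fun_sum fun j _ => (hA i j).mul (hB j k)

variable {V : Type*} [Fintype V] [DecidableEq V] {c : V → V → ℝ} {q : ℝ}

theorem differentiableAt_rootDistribution_apply (hZ : partitionFn c q ≠ 0) (a b : V) :
    DifferentiableAt ℝ (fun p => rootDistribution c p a b) q := by
  have hZd : Differentiable ℝ (partitionFn c) := by unfold partitionFn forestWeight; fun_prop
  have hBd : Differentiable ℝ fun p => rootKernel c p a b := by
    simp only [rootKernel, forestWeight, Matrix.of_apply]; fun_prop
  simpa only [rootDistribution, Matrix.smul_apply, smul_eq_mul] using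
    ((hZd q).fun_inv hZ).fun_mul (hBd q)

theorem hasDerivAt_rootDistribution_apply (hc : ∀ a b, 0 ≤ c a b) (hq : 0 < q) (a b : V) :
    HasDerivAt (fun p => rootDistribution c p a b)
      ((rootDistribution c q - rootDistribution c q * rootDistribution c q) a b / q) q := by
  set K := rootDistribution c
  set K' : Matrix V V ℝ := Matrix.of fun a b => deriv (fun p => K p a b) q
  have hK : ∀ a b, HasDerivAt (fun p => K p a b) (K' a b) q := fun a b =>
    (differentiableAt_rootDistribution_apply (partitionFn_pos hc hq).ne' a b).hasDerivAt
  have hM : ∀ a b, HasDerivAt (fun p => (p • 1 + laplacian c) a b) ((1 : Matrix V V ℝ) a b) q :=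
    fun a b => by
      simpa using ((hasDerivAt_id q).mul_const ((1 : Matrix V V ℝ) a b)).add_const (laplacian c a b)
  -- `(p • 1 + L) * K p = p • 1` holds for all `p > 0`; differentiate it at `q`
  have hdiff : K q + (q • 1 + laplacian c) * K' = 1 := by
    ext a b
    have hid : (fun p => ((p • 1 + laplacian c) * K p) a b) =ᶠ[nhds q]
        fun p => p * (1 : Matrix V V ℝ) a b := by
      filter_upwards [Ioi_mem_nhds hq] with p hp
      rw [smul_one_add_laplacian_mul_rootDistribution (partitionFn_pos hc hp).ne',
        Matrix.smul_apply, smul_eq_mul]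
    have := (hasDerivAt_matrix_mul_apply hM hK a b).unique
      (((hasDerivAt_id q).mul_const _).congr_of_eventuallyEq hid)
    simpa using this
  have hKM : K q * (q • 1 + laplacian c) = q • 1 := mul_eq_smul_one_comm hq.ne'
    (smul_one_add_laplacian_mul_rootDistribution (partitionFn_pos hc hq).ne')
  have hK' : q • K' = K q - K q * K q := by
    have := congrArg (K q * ·) hdiff
    simp only [Matrix.mul_add, ← Matrix.mul_assoc, hKM, Matrix.smul_mul, Matrix.one_mul,
      Matrix.mul_one] at this
    rw [eq_sub_iff_add_eq', this]
  convert hK a b using 1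
  rw [← hK', Matrix.smul_apply, smul_eq_mul, mul_div_cancel_left₀ _ hq.ne']

end Derivative

section Graph

variable {V : Type*} {E : V → V → Prop} {w : V → V → ℝ} {a b : V}

def restrictWeight (E : V → V → Prop) (w : V → V → ℝ) (a b : V) : ℝ := if E a b then w a b else 0

theorem restrictWeight_nonneg (hw : ∀ a b, 0 ≤ w a b) (a b : V) : 0 ≤ restrictWeight E w a b := by
  unfold restrictWeight
  split_ifs
  exacts [hw a b, le_rfl]

variable [Fintype V] {f : V → Option V}

theorem fWeight_restrictWeight_of_isRForest (hf : IsRForest E f) :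
    fWeight (restrictWeight E w) f = fWeight w f :=
  prod_congr rfl fun v _ => by
    cases hv : f v with
    | none => rfl
    | some u => simp [restrictWeight, hf.2 v u hv]

theorem fWeight_restrictWeight_of_not_mem (h : f a = some b) (hE : ¬ E a b) :
    fWeight (restrictWeight E w) f = 0 :=
  prod_eq_zero (mem_univ a) (by simp [h, restrictWeight, hE])

variable [DecidableEq V]

theorem fMeasure_eq_sum_forestWeight (q : ℝ) (H : Set (V → Option V)) :
    fMeasure E w q H = ∑ f ∈ forests with f ∈ H, forestWeight (restrictWeight E w) q f := by
  rw [fMeasure, forests, filter_filter]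
  refine sum_subset_zero_on_sdiff ?_ ?_ ?_ <;> intro f hf
  · simp only [mem_filter, mem_univ, true_and] at hf ⊢
    exact ⟨hf.1.1, hf.2⟩
  · obtain ⟨hF, hRF⟩ := mem_sdiff.1 hf
    rw [mem_filter] at hF hRF
    obtain ⟨a, b, hab, hE⟩ : ∃ a b, f a = some b ∧ ¬ E a b := by
      by_contra! h
      exact hRF ⟨mem_univ f, ⟨hF.2.1, h⟩, hF.2.2⟩
    rw [forestWeight, fWeight_restrictWeight_of_not_mem hab hE, mul_zero]
  · rw [forestWeight, fWeight_restrictWeight_of_isRForest (mem_filter.1 hf).2.1]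

theorem rootProb_eq_rootDistribution (q : ℝ) (x : V) :
    rootProb E w q x = rootDistribution (restrictWeight E w) q x x := by
  rw [rootProb, fProb, Zf, fMeasure_eq_sum_forestWeight, fMeasure_eq_sum_forestWeight,
    rootDistribution, Matrix.smul_apply, smul_eq_mul, rootKernel, Matrix.of_apply, div_eq_inv_mul,
    partitionFn]
  simp only [Set.mem_univ, filter_true, Set.mem_ofPred_eq]
  congr 2
  exact filter_congr fun f hf => (root_eq_self_iff (mem_forests.1 hf)).symm

end Graph

end RootedForest

open RootedForest

variable {V : Type*} [Fintype V] [DecidableEq V]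

/-- **Monotonicity of rooting probabilities.** The map `q ↦ P(x ∈ R_q)` is differentiable
on `(0,∞)` with `0 ≤ d/dq P(x ∈ R_q) ≤ (1/q)·P(x ∈ R_q)`; in particular it is
non-decreasing on `(0,∞)`. -/
theorem rooting_probability_monotone (E : V → V → Prop) (w : V → V → ℝ)
    (hw : ∀ a b : V, 0 ≤ w a b) (x : V) :
    (∀ q : ℝ, 0 < q → DifferentiableAt ℝ (fun p => rootProb E w p x) q) ∧
    (∀ q : ℝ, 0 < q →
      0 ≤ deriv (fun p => rootProb E w p x) q ∧
      deriv (fun p => rootProb E w p x) q ≤ 1 / q * rootProb E w q x) ∧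
    MonotoneOn (fun p => rootProb E w p x) (Set.Ioi 0) := by
  have hc := restrictWeight_nonneg (E := E) hw
  set K := rootDistribution (restrictWeight E w)
  have hK : (fun p => rootProb E w p x) = fun p => K p x x :=
    funext fun p => rootProb_eq_rootDistribution p x
  have hderiv : ∀ q, 0 < q → HasDerivAt (fun p => rootProb E w p x) ((K q - K q * K q) x x / q) q :=
    fun q hq => hK ▸ hasDerivAt_rootDistribution_apply hc hq x x
  have hbounds : ∀ q : ℝ, 0 < q → 0 ≤ deriv (fun p => rootProb E w p x) q ∧
      deriv (fun p => rootProb E w p x) q ≤ 1 / q * rootProb E w q x := by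
    intro q hq
    have hle := mul_self_rootDistribution_apply_le hc hq x
    have hnonneg := mul_self_rootDistribution_apply_nonneg hc hq.le x
    rw [(hderiv q hq).deriv, Matrix.sub_apply, rootProb_eq_rootDistribution, one_div_mul_eq_div]
    exact ⟨div_nonneg (by linarith) hq.le, div_le_div_of_nonneg_right (by linarith) hq.le⟩
  refine ⟨fun q hq => (hderiv q hq).differentiableAt, hbounds, ?_⟩
  refine monotoneOn_of_deriv_nonneg (convex_Ioi 0) (HasDerivAt.continuousOn hderiv) ?_ ?_ <;>
    rw [interior_Ioi]
  · exact fun q hq => (hderiv q hq).differentiableAt.differentiableWithinAt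
  · exact fun q hq => (hbounds q hq).1

end
end
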